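/- arXiv:2406.14936 — 8 statements merged into one kernel-verified Lean document; each statement's English description precedes it below -/
import Mathlib

section
/- Let n ∈ ℕ, α ∈ (0,1), and let real numbers f_{k,l} for 1 ≤ k ≤ l ≤ n together with f_{1,0} = 0 satisfy the following recursion for all 2 ≤ k ≤ l ≤ n: if k is even and l is even then f_{k,l} = f_{k−1,l} + ((k−l−2)/(2(1−α))) f_{k−1,k−1}; if k is even and l is odd then f_{k,l} = f_{k−1,l} + ((k−l−3+2α)/(2(1−α))) f_{k−1,k−1}; if k is odd and l is even then f_{k,l} = f_{k−1,l} + ((k−l−1−2α)/(2α)) f_{k−1,k−1}; if k is odd and l is odd then f_{k,l} = f_{k−1,l} + ((k−l−2)/(2α)) f_{k−1,k−1}. Then for all 2 ≤ k ≤ l ≤ n the following closed forms hold: if k is even and l is even then f_{k,l} = f_{1,l} − ((l−k+2)/(2(1−α))) f_{1,k−1} + ((l−k+2α)/(2(1−α))) f_{1,k−2}; if k is even and l is odd then f_{k,l} = f_{1,l} − ((l−k+3−2α)/(2(1−α))) f_{1,k−1} + ((l−k+1)/(2(1−α))) f_{1,k−2}; if k is odd and l is even then f_{k,l} = f_{1,l}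 − ((l−k+1+2α)/(2α)) f_{1,k−1} + ((l−k+1)/(2α)) f_{1,k−2}; if k is odd and l is odd then f_{k,l} = f_{1,l} − ((l−k+2)/(2α)) f_{1,k−1} + ((l−k+2−2α)/(2α)) f_{1,k−2}. -/
/-- The doubly-indexed sequence `f k l` satisfying the
parity-dependent recursion (with `f 1 0 = 0`) admits the stated closed forms
in terms of `f 1 l`, `f 1 (k-1)`, `f 1 (k-2)` for all `2 ≤ k ≤ l ≤ n`. -/
theorem residual_recursion_closed_form
    (n : ℕ) (α : ℝ) (hα0 : 0 < α) (hα1 : α < 1) (f : ℕ → ℕ → ℝ)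
    (h10 : f 1 0 = 0)
    (hrec : ∀ k l : ℕ, 2 ≤ k → k ≤ l → l ≤ n →
      (Even k → Even l →
        f k l = f (k - 1) l + (((k : ℝ) - l - 2) / (2 * (1 - α))) * f (k - 1) (k - 1)) ∧
      (Even k → Odd l →
        f k l = f (k - 1) l + (((k : ℝ) - l - 3 + 2 * α) / (2 * (1 - α))) * f (k - 1) (k - 1)) ∧
      (Odd k → Even l →
        f k l = f (k - 1) l + (((k : ℝ) - l - 1 - 2 * α) / (2 * α)) * f (k - 1) (k - 1)) ∧
      (Odd k → Odd l →
        f k l = f (k - 1) l + (((k : ℝ) - l - 2) / (2 * α)) * f (k - 1) (k - 1))) :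
    ∀ k l : ℕ, 2 ≤ k → k ≤ l → l ≤ n →
      (Even k → Even l →
        f k l = f 1 l - (((l : ℝ) - k + 2) / (2 * (1 - α))) * f 1 (k - 1)
          + (((l : ℝ) - k + 2 * α) / (2 * (1 - α))) * f 1 (k - 2)) ∧
      (Even k → Odd l →
        f k l = f 1 l - (((l : ℝ) - k + 3 - 2 * α) / (2 * (1 - α))) * f 1 (k - 1)
          + (((l : ℝ) - k + 1) / (2 * (1 - α))) * f 1 (k - 2)) ∧
      (Odd k → Even l →
        f k l = f 1 l - (((l : ℝ) - k + 1 + 2 * α) / (2 * α)) * f 1 (k - 1)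
          + (((l : ℝ) - k + 1) / (2 * α)) * f 1 (k - 2)) ∧
      (Odd k → Odd l →
        f k l = f 1 l - (((l : ℝ) - k + 2) / (2 * α)) * f 1 (k - 1)
          + (((l : ℝ) - k + 2 - 2 * α) / (2 * α)) * f 1 (k - 2)) := by
  have hA : α ≠ 0 := ne_of_gt hα0
  have hB : (1 : ℝ) - α ≠ 0 := by linarith
  have main : ∀ k, 2 ≤ k → ∀ l, k ≤ l → l ≤ n →
      (Even k → Even l →
        f k l = f 1 l - (((l : ℝ) - k + 2) / (2 * (1 - α))) * f 1 (k - 1)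
          + (((l : ℝ) - k + 2 * α) / (2 * (1 - α))) * f 1 (k - 2)) ∧
      (Even k → Odd l →
        f k l = f 1 l - (((l : ℝ) - k + 3 - 2 * α) / (2 * (1 - α))) * f 1 (k - 1)
          + (((l : ℝ) - k + 1) / (2 * (1 - α))) * f 1 (k - 2)) ∧
      (Odd k → Even l →
        f k l = f 1 l - (((l : ℝ) - k + 1 + 2 * α) / (2 * α)) * f 1 (k - 1)
          + (((l : ℝ) - k + 1) / (2 * α)) * f 1 (k - 2)) ∧
      (Odd k → Odd l →
        f k l = f 1 l - (((l : ℝ) - k + 2) / (2 * α)) * f 1 (k - 1)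
          + (((l : ℝ) - k + 2 - 2 * α) / (2 * α)) * f 1 (k - 2)) := by
    intro k hk
    induction k, hk using Nat.le_induction with
    | base =>
      intro l hl hn
      have hrec2 := hrec 2 l (by norm_num) hl hn
      have he2 : Even 2 := by decide
      have hno2 : ¬ Odd 2 := by decide
      refine ⟨?_, ?_, ?_, ?_⟩
      · intro _ hel
        have := hrec2.1 he2 hel
        simp only [show (2:ℕ) - 1 = 1 from rfl, show (2:ℕ) - 2 = 0 from rfl] at this ⊢
        rw [this, h10]
        push_cast
        field_simp
        ring
      · intro _ hol
        have := hrec2.2.1 he2 hol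
        simp only [show (2:ℕ) - 1 = 1 from rfl, show (2:ℕ) - 2 = 0 from rfl] at this ⊢
        rw [this, h10]
        push_cast
        field_simp
        ring
      · exact fun h => absurd h hno2
      · exact fun h => absurd h hno2
    | succ k hk ih =>
      intro l hl hn
      have hkl : k ≤ l := le_trans (Nat.le_succ k) hl
      have hkn : k ≤ n := le_trans hkl hn
      have hidx1 : k + 1 - 1 = k := rfl
      have hidx2 : k + 1 - 2 = k - 1 := rfl
      have hreck := hrec (k+1) l (by omega) hl hn
      have ihl := ih l hkl hn
      have ihk := ih k le_rfl hkn
      have hcastk : ((k : ℝ)) - 1 = ((k - 1 : ℕ) : ℝ) := by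
        have : (1:ℕ) ≤ k := by omega
        push_cast [this]; ring
      refine ⟨?_, ?_, ?_, ?_⟩
      · intro he ho
        have hok : Odd k := Nat.not_even_iff_odd.mp (Nat.even_add_one.mp he)
        have h1 := hreck.1 he ho
        have h2 := ihl.2.2.1 hok ho
        have h3 := ihk.2.2.2 hok hok
        simp only [hidx1, hidx2] at h1 ⊢
        rw [h1, h2, h3]
        push_cast
        field_simp
        ring
      · intro he ho
        have hok : Odd k := Nat.not_even_iff_odd.mp (Nat.even_add_one.mp he)
        have h1 := hreck.2.1 he ho
        have h2 := ihl.2.2.2 hok ho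
        have h3 := ihk.2.2.2 hok hok
        simp only [hidx1, hidx2] at h1 ⊢
        rw [h1, h2, h3]
        push_cast
        field_simp
        ring
      · intro hok1 ho
        have hek : Even k := by
          simpa [Nat.even_add_one, not_not] using Nat.not_even_iff_odd.mpr hok1
        have h1 := hreck.2.2.1 hok1 ho
        have h2 := ihl.1 hek ho
        have h3 := ihk.1 hek hek
        simp only [hidx1, hidx2] at h1 ⊢
        rw [h1, h2, h3]
        push_cast
        field_simp
        ring
      · intro hok1 ho
        have hek : Even k := by
          simpa [Nat.even_add_one, not_not] using Nat.not_even_iff_odd.mpr hok1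
        have h1 := hreck.2.2.2 hok1 ho
        have h2 := ihl.2.1 hek ho
        have h3 := ihk.1 hek hek
        simp only [hidx1, hidx2] at h1 ⊢
        rw [h1, h2, h3]
        push_cast
        field_simp
        ring
  intro k l hk hkl hln
  exact main k hk l hkl hln
end

section
/- Let n ∈ ℕ, α ∈ (0,1), and let real numbers f_{k,l} for 1 ≤ k ≤ l ≤ n together with f_{1,0} = 0 satisfy the following recursion for all 2 ≤ k ≤ l ≤ n: if k is even and l is even then f_{k,l} = f_{k−1,l} + ((k−l−2)/(2(1−α))) f_{k−1,k−1}; if k is even and l is odd then f_{k,l} = f_{k−1,l} + ((k−l−3+2α)/(2(1−α))) f_{k−1,k−1}; if k is odd and l is even then f_{k,l} = f_{k−1,l} + ((k−l−1−2α)/(2α)) f_{k−1,k−1}; if k is odd and l is odd then f_{k,l} = f_{k−1,l} + ((k−l−2)/(2α)) f_{k−1,k−1}. Then for all 2 ≤ k ≤ n: if k is even, f_{k,k} = f_{1,k} − (1/(1−α)) f_{1,k−1} + (α/(1−α)) f_{1,k−2}, and if k is odd, f_{k,k} = f_{1,k} − (1/α) f_{1,k−1} + ((1−α)/α) f_{1,k−2}.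 -/
set_option maxHeartbeats 1000000

/-- Auxiliary coefficient function for the parity-dependent recursion. -/
noncomputable def residualCoef (α : ℝ) (k l : ℕ) : ℝ :=
  if Even k then
    if Even l then ((k : ℝ) - l - 2) / (2 * (1 - α))
    else ((k : ℝ) - l - 3 + 2 * α) / (2 * (1 - α))
  else
    if Even l then ((k : ℝ) - l - 1 - 2 * α) / (2 * α)
    else ((k : ℝ) - l - 2) / (2 * α)

/-- The doubly-indexed sequence `f k l` satisfying the
parity-dependent recursion (with `f 1 0 = 0`) admits, on the diagonal `k = l`,
the stated closed forms in terms of `f 1 k`, `f 1 (k-1)`, `f 1 (k-2)`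
for all `2 ≤ k ≤ n`. -/
theorem residual_recursion_diagonal_closed_form
    (n : ℕ) (α : ℝ) (hα0 : 0 < α) (hα1 : α < 1) (f : ℕ → ℕ → ℝ)
    (h10 : f 1 0 = 0)
    (hrec : ∀ k l : ℕ, 2 ≤ k → k ≤ l → l ≤ n →
      (Even k → Even l →
        f k l = f (k - 1) l + (((k : ℝ) - l - 2) / (2 * (1 - α))) * f (k - 1) (k - 1)) ∧
      (Even k → Odd l →
        f k l = f (k - 1) l + (((k : ℝ) - l - 3 + 2 * α) / (2 * (1 - α))) * f (k - 1) (k - 1)) ∧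
      (Odd k → Even l →
        f k l = f (k - 1) l + (((k : ℝ) - l - 1 - 2 * α) / (2 * α)) * f (k - 1) (k - 1)) ∧
      (Odd k → Odd l →
        f k l = f (k - 1) l + (((k : ℝ) - l - 2) / (2 * α)) * f (k - 1) (k - 1))) :
    ∀ k : ℕ, 2 ≤ k → k ≤ n →
      (Even k →
        f k k = f 1 k - (1 / (1 - α)) * f 1 (k - 1) + (α / (1 - α)) * f 1 (k - 2)) ∧
      (Odd k →
        f k k = f 1 k - (1 / α) * f 1 (k - 1) + ((1 - α) / α) * f 1 (k - 2)) := by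
  have ha : α ≠ 0 := hα0.ne'
  have hb : (1 : ℝ) - α ≠ 0 := by linarith
  -- step form of the recursion, via the coefficient function
  have hstep : ∀ K l : ℕ, 1 ≤ K → K + 1 ≤ l → l ≤ n →
      f (K + 1) l = f K l + residualCoef α (K + 1) l * f K K := by
    intro K l hK hKl hln
    obtain ⟨e1, e2, e3, e4⟩ := hrec (K + 1) l (by omega) hKl hln
    simp only [Nat.add_sub_cancel] at e1 e2 e3 e4
    rcases Nat.even_or_odd (K + 1) with hk | hk <;> rcases Nat.even_or_odd l with hl | hl
    · rw [e1 hk hl]; simp [residualCoef, hk, hl]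
    · rw [e2 hk hl]; simp [residualCoef, hk, Nat.not_even_iff_odd.mpr hl]
    · rw [e3 hk hl]; simp [residualCoef, Nat.not_even_iff_odd.mpr hk, hl]
    · rw [e4 hk hl]; simp [residualCoef, Nat.not_even_iff_odd.mpr hk, Nat.not_even_iff_odd.mpr hl]
  -- strengthened statement, for all l ≥ k
  have key : ∀ k : ℕ, 2 ≤ k → ∀ l : ℕ, k ≤ l → l ≤ n →
      f k l = f 1 l + residualCoef α k l * f 1 (k - 1)
        - residualCoef α (k + 1) l * (if Even k then α / (1 - α) else (1 - α) / α)
          * f 1 (k - 2) := by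
    intro k hk
    induction k, hk using Nat.le_induction with
    | base =>
      intro l hkl hln
      have h := hstep 1 l le_rfl hkl hln
      norm_num [h10] at h ⊢
      exact h
    | succ k hk ih =>
      intro l hkl hln
      obtain ⟨m, rfl⟩ : ∃ m, k = m + 2 := ⟨k - 2, by omega⟩
      have hl1 := ih l (by omega) hln
      have hl2 := ih (m + 2) le_rfl (by omega)
      have h1 := hstep (m + 2) l (by omega) hkl hln
      rw [hl1, hl2] at h1
      rw [h1]
      simp only [show m + 2 - 1 = m + 1 by omega, show m + 2 - 2 = m by omega,
        show m + 2 + 1 - 1 = m + 2 by omega, show m + 2 + 1 - 2 = m + 1 by omega] at *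
      have p2 : Even (m + 2) ↔ Even m := by
        simp [show m + 2 = m + 1 + 1 from rfl, Nat.even_add_one]
      have p3 : Even (m + 3) ↔ ¬ Even m := by
        simp [show m + 3 = m + 1 + 1 + 1 from rfl, Nat.even_add_one]
      have p4 : Even (m + 4) ↔ Even m := by
        simp [show m + 4 = m + 1 + 1 + 1 + 1 from rfl, Nat.even_add_one]
      rcases Nat.even_or_odd m with hm | hm <;>
        rcases Nat.even_or_odd l with hl | hl
      · simp only [residualCoef, show m + 2 + 1 = m + 3 from rfl,
          show m + 3 + 1 = m + 4 from rfl, p2, p3, p4, hm, hl, not_true_eq_false,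
          if_true, if_false, ite_true, ite_false]
        push_cast
        field_simp
        ring
      · have hle : ¬ Even l := Nat.not_even_iff_odd.mpr hl
        simp only [residualCoef, show m + 2 + 1 = m + 3 from rfl,
          show m + 3 + 1 = m + 4 from rfl, p2, p3, p4, hm, hle, not_true_eq_false,
          if_true, if_false, ite_true, ite_false]
        push_cast
        field_simp
        ring
      · have hme : ¬ Even m := Nat.not_even_iff_odd.mpr hm
        simp only [residualCoef, show m + 2 + 1 = m + 3 from rfl,
          show m + 3 + 1 = m + 4 from rfl, p2, p3, p4, hme, hl, not_false_eq_true,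
          if_true, if_false, ite_true, ite_false]
        push_cast
        field_simp
        ring
      · have hme : ¬ Even m := Nat.not_even_iff_odd.mpr hm
        have hle : ¬ Even l := Nat.not_even_iff_odd.mpr hl
        simp only [residualCoef, show m + 2 + 1 = m + 3 from rfl,
          show m + 3 + 1 = m + 4 from rfl, p2, p3, p4, hme, hle, not_false_eq_true,
          if_true, if_false, ite_true, ite_false]
        push_cast
        field_simp
        ring
  intro k hk hkn
  have h := key k hk k le_rfl hkn
  constructor
  · intro hke
    have hko : ¬ Even (k + 1) := by simp [Nat.even_add_one, hke]
    rw [h]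
    simp only [residualCoef, hke, hko, if_true, if_false, ite_true, ite_false]
    push_cast
    field_simp
    ring
  · intro hko
    have hke : ¬ Even k := Nat.not_even_iff_odd.mpr hko
    have hke1 : Even (k + 1) := by simpa [Nat.even_add_one] using hke
    rw [h]
    simp only [residualCoef, hke, hke1, if_true, if_false, ite_true, ite_false]
    push_cast
    field_simp
    ring
end

section
/- Let φ : ℝ → ℝ be the Gaussian φ(x) = exp(−x²). Then for every p ∈ ℕ (p ≥ 0), the p-th derivative of φ satisfies sup_{x ∈ ℝ} |φ^{(p)}(x)| ≤ p!. -/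
/-!
Write `f p` for the `p`-th derivative of `φ x = exp (-x²)`. Differentiating `φ' = -2xφ` gives the
Hermite recurrence `f (p + 2) = -2x f (p + 1) - 2(p + 1) f p`, and every `x ^ k * f p` vanishes
at infinity. Hence `|f p|` attains its maximum at some `x₀` with `f (p + 1) x₀ = 0`, that is
`x₀ f p x₀ = -p f (p - 1) x₀`. If `|x₀| ≥ 1` this gives `|f p x₀| ≤ p |f (p - 1) x₀| ≤ p!`;
if `|x₀| < 1` the recurrence gives `|f p x₀| ≤ 2 (p - 1)! + 2 (p - 1) (p - 2)! = 4 (p - 1)!`,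
which is at most `p!` once `p ≥ 4`. The cases `p ≤ 3` follow from the explicit formulas and
`exp (x²) ≥ 1 + x² + x⁴/2 + x⁶/6`.
-/

open Filter Topology

local notation "φ" => fun t : ℝ => Real.exp (-t ^ 2)

theorem exists_forall_norm_le_norm_of_tendsto_cocompact {β E : Type*}
    [TopologicalSpace β] [Nonempty β] [SeminormedAddCommGroup E] {f : β → E} (hf : Continuous f)
    (hlim : Tendsto f (cocompact β) (𝓝 0)) : ∃ x₀, ∀ x, ‖f x‖ ≤ ‖f x₀‖ := by
  by_cases hzero : ∀ x, ‖f x‖ = 0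
  · exact ⟨Classical.arbitrary β, fun x => by simp [hzero]⟩
  obtain ⟨x₁, hx₁⟩ := not_forall.mp hzero
  have hev : ∀ᶠ x in cocompact β, ‖f x‖ ≤ ‖f x₁‖ :=
    ((tendsto_zero_iff_norm_tendsto_zero.mp hlim).eventually_lt_const
      ((norm_nonneg _).lt_of_ne' hx₁)).mono fun _ h => h.le
  exact hf.norm.exists_forall_ge' x₁ hev

theorem deriv_eq_zero_of_forall_abs_le {f : ℝ → ℝ} {x₀ : ℝ} (h : ∀ x, |f x| ≤ |f x₀|) :
    deriv f x₀ = 0 := by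
  rcases le_total 0 (f x₀) with hpos | hneg
  · refine IsLocalMax.deriv_eq_zero (Eventually.of_forall fun x => ?_)
    linarith [le_abs_self (f x), h x, abs_of_nonneg hpos]
  · refine IsLocalMin.deriv_eq_zero (Eventually.of_forall fun x => ?_)
    linarith [neg_abs_le (f x), h x, abs_of_nonpos hneg]

theorem abs_le_factorial_of_critical {n : ℕ} (hn : 2 ≤ n) {x a b c : ℝ}
    (hcrit : x * a = -(n + 2) * b) (hrec : a = -2 * x * b - 2 * (n + 1) * c)
    (hb : |b| ≤ (n + 1).factorial) (hc : |c| ≤ n.factorial) : |a| ≤ (n + 2).factorial := by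
  have hfact₁ : ((n + 1).factorial : ℝ) = (n + 1) * n.factorial := by
    push_cast [Nat.factorial_succ]; ring
  have hfact₂ : ((n + 2).factorial : ℝ) = (n + 2) * (n + 1).factorial := by
    push_cast [Nat.factorial_succ]; ring
  rcases le_or_gt 1 |x| with hx | hx
  · calc |a| ≤ |x| * |a| := le_mul_of_one_le_left (abs_nonneg a) hx
      _ = (n + 2) * |b| := by rw [← abs_mul, hcrit, abs_mul, abs_neg, abs_of_pos (by positivity)]
      _ ≤ (n + 2).factorial := by rw [hfact₂]; gcongr
  · have hn' : (2 : ℝ) ≤ n := by exact_mod_cast hn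
    calc |a| ≤ 2 * |x| * |b| + 2 * (n + 1) * |c| := by
          rw [hrec]
          refine (abs_sub _ _).trans (le_of_eq ?_)
          simp only [abs_mul, abs_neg, abs_two, abs_of_pos (by positivity : (0 : ℝ) < n + 1)]
      _ ≤ 2 * 1 * (n + 1).factorial + 2 * (n + 1) * n.factorial := by gcongr
      _ ≤ (n + 2).factorial := by
          rw [hfact₂, hfact₁]
          nlinarith [(Nat.cast_pos.mpr n.factorial_pos : (0 : ℝ) < n.factorial)]

theorem contDiff_gaussian : ContDiff ℝ ⊤ φ := by fun_prop

theorem hasDerivAt_iteratedDeriv_gaussian (n : ℕ) (x : ℝ) :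
    HasDerivAt (iteratedDeriv n φ) (iteratedDeriv (n + 1) φ x) x := by
  rw [iteratedDeriv_succ]
  exact ((contDiff_gaussian.differentiable_iteratedDeriv n (by simp)) x).hasDerivAt

theorem hasDerivAt_gaussian (x : ℝ) :
    HasDerivAt φ (-2 * x * Real.exp (-x ^ 2)) x := by
  convert ((hasDerivAt_pow 2 x).fun_neg).exp using 1
  push_cast
  ring

theorem iteratedDeriv_one_gaussian (x : ℝ) :
    iteratedDeriv 1 φ x = -2 * x * Real.exp (-x ^ 2) := by
  rw [iteratedDeriv_one, (hasDerivAt_gaussian x).deriv]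

theorem iteratedDeriv_gaussian_add_two (n : ℕ) (x : ℝ) :
    iteratedDeriv (n + 2) φ x =
      -2 * x * iteratedDeriv (n + 1) φ x - 2 * (n + 1) * iteratedDeriv n φ x := by
  induction n generalizing x with
  | zero =>
    have h : HasDerivAt (iteratedDeriv 1 φ)
        (-2 * 1 * Real.exp (-x ^ 2) + -2 * x * (-2 * x * Real.exp (-x ^ 2))) x :=
      (((hasDerivAt_id x).const_mul (-2)).fun_mul (hasDerivAt_gaussian x)).congr_of_eventuallyEq
        (.of_forall iteratedDeriv_one_gaussian)
    rw [(hasDerivAt_iteratedDeriv_gaussian 1 x).unique h, iteratedDeriv_one_gaussian,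
      iteratedDeriv_zero]
    ring
  | succ n ih =>
    have h : HasDerivAt (iteratedDeriv (n + 2) φ)
        (-2 * 1 * iteratedDeriv (n + 1) φ x + -2 * x * iteratedDeriv (n + 2) φ x
          - 2 * (n + 1) * iteratedDeriv (n + 1) φ x) x :=
      ((((hasDerivAt_id x).const_mul (-2)).fun_mul
        (hasDerivAt_iteratedDeriv_gaussian (n + 1) x)).fun_sub
        ((hasDerivAt_iteratedDeriv_gaussian n x).const_mul _)).congr_of_eventuallyEq (.of_forall ih)
    rw [(hasDerivAt_iteratedDeriv_gaussian (n + 2) x).unique h]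
    push_cast
    ring

theorem tendsto_pow_mul_gaussian_cocompact (k : ℕ) :
    Tendsto (fun x : ℝ => x ^ k * Real.exp (-x ^ 2)) (cocompact ℝ) (𝓝 0) := by
  have h := tendsto_rpow_abs_mul_exp_neg_mul_sq_cocompact one_pos k
  rw [tendsto_zero_iff_abs_tendsto_zero]
  refine h.congr fun x => ?_
  simp [abs_mul, abs_pow]

theorem tendsto_pow_mul_iteratedDeriv_gaussian_cocompact (n k : ℕ) :
    Tendsto (fun x => x ^ k * iteratedDeriv n φ x) (cocompact ℝ) (𝓝 0) := by
  induction n using Nat.twoStepInduction generalizing k with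
  | zero => simpa using tendsto_pow_mul_gaussian_cocompact k
  | one =>
    have h := (tendsto_pow_mul_gaussian_cocompact (k + 1)).const_mul (-2)
    rw [mul_zero] at h
    refine h.congr fun x => ?_
    rw [iteratedDeriv_one_gaussian]
    ring
  | more n ih₀ ih₁ =>
    have h := ((ih₁ (k + 1)).const_mul (-2)).sub ((ih₀ k).const_mul (2 * ((n : ℝ) + 1)))
    simp only [mul_zero, sub_zero] at h
    refine h.congr fun x => ?_
    rw [iteratedDeriv_gaussian_add_two]
    ring

theorem abs_mul_exp_neg_sq_le {a c x : ℝ} (h : |a| ≤ c * (1 + x ^ 2 + x ^ 4 / 2 + x ^ 6 / 6)) :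
    |a * Real.exp (-x ^ 2)| ≤ c := by
  have hexp : 1 + x ^ 2 + x ^ 4 / 2 + x ^ 6 / 6 ≤ Real.exp (x ^ 2) := by
    convert Real.sum_le_exp_of_nonneg (sq_nonneg x) 4 using 1
    simp [Finset.sum_range_succ, Nat.factorial]
    ring
  have hc : 0 ≤ c := nonneg_of_mul_nonneg_left ((abs_nonneg a).trans h) (by positivity)
  rw [abs_mul, abs_of_pos (Real.exp_pos _), Real.exp_neg, ← div_eq_mul_inv,
    div_le_iff₀ (Real.exp_pos _)]
  exact h.trans (by gcongr)

theorem abs_iteratedDeriv_gaussian_le_factorial_of_le_three {p : ℕ} (hp : p ≤ 3) (x : ℝ) :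
    |iteratedDeriv p φ x| ≤ p.factorial := by
  have h₀ : iteratedDeriv 0 φ x = 1 * Real.exp (-x ^ 2) := by
    rw [iteratedDeriv_zero, one_mul]
  have h₁ := iteratedDeriv_one_gaussian x
  have h₂ : iteratedDeriv 2 φ x = (4 * x ^ 2 - 2) * Real.exp (-x ^ 2) := by
    rw [iteratedDeriv_gaussian_add_two 0, h₁, iteratedDeriv_zero]
    ring
  have h₃ : iteratedDeriv 3 φ x = (12 * x - 8 * x ^ 3) * Real.exp (-x ^ 2) := by
    rw [iteratedDeriv_gaussian_add_two 1, h₂, h₁]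
    push_cast
    ring
  interval_cases p <;> simp only [h₀, h₁, h₂, h₃, Nat.factorial, Nat.cast_ofNat, Nat.cast_one,
      Nat.succ_eq_add_one, zero_add, Nat.reduceAdd, Nat.reduceMul] <;>
    refine abs_mul_exp_neg_sq_le (abs_le.mpr ⟨?_, ?_⟩) <;>
    nlinarith [sq_nonneg (x - 1), sq_nonneg (x + 1), sq_nonneg (x ^ 2 - 1), sq_nonneg x,
      sq_nonneg (x * (x - 4 / 3)), sq_nonneg (x * (x + 4 / 3)), sq_nonneg (x ^ 2),
      sq_nonneg (x ^ 3)]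

theorem exists_forall_abs_iteratedDeriv_gaussian_le (n : ℕ) :
    ∃ x₀, ∀ x, |iteratedDeriv n φ x| ≤ |iteratedDeriv n φ x₀| := by
  simpa only [Real.norm_eq_abs] using exists_forall_norm_le_norm_of_tendsto_cocompact
    (contDiff_gaussian.continuous_iteratedDeriv n (by simp))
    (by simpa using tendsto_pow_mul_iteratedDeriv_gaussian_cocompact n 0)

/-- All iterated derivatives of the Gaussian `x ↦ exp(-x²)` satisfy
`sup_x |φ^{(p)}(x)| ≤ p!`. -/
theorem gaussian_iterated_deriv_bound (p : ℕ) (x : ℝ) :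
    |iteratedDeriv p (fun t : ℝ => Real.exp (-t ^ 2)) x| ≤ (p.factorial : ℝ) := by
  induction p using Nat.strong_induction_on generalizing x with
  | _ p ih =>
  rcases le_or_gt p 3 with hp | hp
  · exact abs_iteratedDeriv_gaussian_le_factorial_of_le_three hp x
  obtain ⟨n, rfl⟩ : ∃ n, p = n + 2 := ⟨p - 2, by omega⟩
  obtain ⟨x₀, hmax⟩ := exists_forall_abs_iteratedDeriv_gaussian_le (n + 2)
  have hcrit : iteratedDeriv (n + 3) φ x₀ = 0 := by
    rw [iteratedDeriv_succ]
    exact deriv_eq_zero_of_forall_abs_le hmax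
  rw [iteratedDeriv_gaussian_add_two] at hcrit
  refine (hmax x).trans (abs_le_factorial_of_critical (by omega) (x := x₀) ?_
    (iteratedDeriv_gaussian_add_two n x₀) (ih _ (by omega) x₀) (ih _ (by omega) x₀))
  push_cast at hcrit
  linarith
end

section
/- Let φ : ℝ → ℝ be the Gaussian φ(x) = exp(−x²) and let δ > 0. Then there exist C > 0 and m₀ ∈ ℕ such that for all m ≥ m₀: (3m/δ)^{2m} ≥ C · m^{−1/2} · (3e/(2δ))^{2m} · max_{0 ≤ p ≤ 2m} sup_{b ∈ ℝ} |φ^{(p)}(b)|. In particular, if 0 < δ < 3e/2, the quantity (3m/δ)^{2m} / max_{0 ≤ p ≤ 2m} sup_{b ∈ ℝ} |φ^{(p)}(b)| grows at least exponentially in m. -/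
/-- The maximum over `0 ≤ p ≤ 2m` of the supremum over `b ∈ ℝ` of `|φ^{(p)}(b)|`. -/
noncomputable def maxDerivSup (φ : ℝ → ℝ) (m : ℕ) : ℝ :=
  (Finset.range (2 * m + 1)).sup' Finset.nonempty_range_add_one fun p =>
    ⨆ b : ℝ, |iteratedDeriv p φ b|

/-!
The `n`-th derivative of `exp (-x²)` is `Pₙ(x) exp (-x²)` with `Pₙ₊₁ = Pₙ' - 2 X Pₙ`. Measure a
polynomial by `Σ |aₖ| wᵏ`: multiplying by `X` costs a factor `w` and differentiating a factor
`deg / w`, so for `n ≤ w²` the weighted norm of `Pₙ` is at most `(3w)ⁿ`, and since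
`tᵏ exp (-t²) ≤ wᵏ` for `k ≤ w²` this also bounds `|φ⁽ⁿ⁾|`. Taking `w² = 2m`, the maximum over
`p ≤ 2m` is at most `(18m)ᵐ`, which is `≤ (2m/e)^{2m}` for `m ≥ 41`; this crude bound replaces
`sup |φ⁽ᵖ⁾| ≤ p!` and Stirling, and `(3e/(2δ))^{2m} (2m/e)^{2m} = (3m/δ)^{2m}`. For the growth
statement, `m^{-1/2} ρ^{2m} ≥ ρᵐ` with `ρ = 3e/(2δ) > 1` as soon as `m ≤ ρᵐ`.
-/

open Polynomial Finset Real

lemma pow_mul_exp_neg_sq_le {k : ℕ} {w t : ℝ} (hw : 0 < w) (ht : 0 ≤ t) (hk : (k : ℝ) ≤ w ^ 2) :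
    t ^ k * exp (-t ^ 2) ≤ w ^ k := by
  rcases le_or_gt t w with htw | hwt
  · calc t ^ k * exp (-t ^ 2) ≤ w ^ k * 1 := by
          gcongr
          exact exp_le_one_iff.mpr (by nlinarith)
      _ = w ^ k := mul_one _
  · -- `s ≤ exp (s - 1)` at `s = t / w ≥ 1`, raised to the power `k ≤ w²`.
    have hs : 1 ≤ t / w := (one_le_div hw).mpr hwt.le
    have hpow : (t / w) ^ k ≤ exp (w * t - w ^ 2) :=
      calc (t / w) ^ k ≤ exp (t / w - 1) ^ k := by
            gcongr
            linarith [add_one_le_exp (t / w - 1)]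
        _ = exp (k * (t / w - 1)) := by rw [← exp_nat_mul]
        _ ≤ exp (w ^ 2 * (t / w - 1)) := by gcongr
        _ = exp (w * t - w ^ 2) := by congr 1; field_simp
    calc t ^ k * exp (-t ^ 2) = w ^ k * ((t / w) ^ k * exp (-t ^ 2)) := by
          rw [div_pow]; field_simp
      _ ≤ w ^ k * (exp (w * t - w ^ 2) * exp (-t ^ 2)) := by gcongr
      _ ≤ w ^ k * 1 := by
          gcongr
          rw [← exp_add, exp_le_one_iff]
          nlinarith
      _ = w ^ k := mul_one _

noncomputable def coeffWeightedNorm (w : ℝ) (P : ℝ[X]) : ℝ :=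
  P.sum fun k a => |a| * w ^ k

section coeffWeightedNorm

variable {w : ℝ} {P Q : ℝ[X]}

lemma coeffWeightedNorm_eq_sum_range {n : ℕ} (hn : P.natDegree < n) :
    coeffWeightedNorm w P = ∑ k ∈ range n, |P.coeff k| * w ^ k :=
  P.sum_over_range' (fun _ => by simp) n hn

lemma coeffWeightedNorm_nonneg (hw : 0 ≤ w) : 0 ≤ coeffWeightedNorm w P :=
  sum_nonneg fun _ _ => by positivity

lemma coeffWeightedNorm_sub_le (hw : 0 ≤ w) :
    coeffWeightedNorm w (P - Q) ≤ coeffWeightedNorm w P + coeffWeightedNorm w Q := by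
  have hP : P.natDegree < max P.natDegree Q.natDegree + 1 := by omega
  have hQ : Q.natDegree < max P.natDegree Q.natDegree + 1 := by omega
  have hPQ : (P - Q).natDegree < max P.natDegree Q.natDegree + 1 :=
    (natDegree_sub_le P Q).trans_lt (Nat.lt_succ_self _)
  rw [coeffWeightedNorm_eq_sum_range hP, coeffWeightedNorm_eq_sum_range hQ,
    coeffWeightedNorm_eq_sum_range hPQ, ← sum_add_distrib]
  gcongr with k
  rw [coeff_sub, ← add_mul]
  exact mul_le_mul_of_nonneg_right (abs_sub _ _) (by positivity)

lemma coeffWeightedNorm_C_mul (a : ℝ) :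
    coeffWeightedNorm w (C a * P) = |a| * coeffWeightedNorm w P := by
  have hP : P.natDegree < P.natDegree + 1 := Nat.lt_succ_self _
  rw [coeffWeightedNorm_eq_sum_range hP,
    coeffWeightedNorm_eq_sum_range ((natDegree_C_mul_le a P).trans_lt hP), mul_sum]
  simp only [coeff_C_mul, abs_mul, mul_assoc]

lemma coeffWeightedNorm_X_mul : coeffWeightedNorm w (X * P) = w * coeffWeightedNorm w P := by
  have hXP : (X * P).natDegree < P.natDegree + 2 := by
    have := natDegree_mul_le (p := (X : ℝ[X])) (q := P)
    have := natDegree_X_le (R := ℝ)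
    omega
  rw [coeffWeightedNorm_eq_sum_range hXP, coeffWeightedNorm_eq_sum_range (Nat.lt_succ_self _),
    sum_range_succ', mul_sum]
  simp only [coeff_X_mul, coeff_X_mul_zero, abs_zero, zero_mul, add_zero, pow_succ]
  exact sum_congr rfl fun _ _ => by ring

lemma coeffWeightedNorm_derivative_le (hw : 0 < w) :
    coeffWeightedNorm w (derivative P) ≤ P.natDegree / w * coeffWeightedNorm w P := by
  set d := P.natDegree
  have hP' : (derivative P).natDegree < d + 1 := by
    have := natDegree_derivative_le P; omega
  have hterm : ∀ k,
      |(derivative P).coeff k| * w ^ k ≤ d / w * (|P.coeff (k + 1)| * w ^ (k + 1)) := by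
    intro k
    rw [coeff_derivative, abs_mul, abs_of_nonneg (by positivity : (0:ℝ) ≤ k + 1)]
    rcases eq_or_ne (P.coeff (k + 1)) 0 with h0 | h0
    · simp [h0]
    · have hk : ((k : ℝ) + 1) ≤ d := by exact_mod_cast le_natDegree_of_ne_zero h0
      calc |P.coeff (k + 1)| * (k + 1) * w ^ k ≤ |P.coeff (k + 1)| * d * w ^ k := by gcongr
        _ = d / w * (|P.coeff (k + 1)| * w ^ (k + 1)) := by field_simp; ring
  calc coeffWeightedNorm w (derivative P)
      = ∑ k ∈ range (d + 1), |(derivative P).coeff k| * w ^ k := coeffWeightedNorm_eq_sum_range hP'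
    _ ≤ ∑ k ∈ range (d + 1), d / w * (|P.coeff (k + 1)| * w ^ (k + 1)) :=
        sum_le_sum fun k _ => hterm k
    _ ≤ d / w * (∑ k ∈ range (d + 1), |P.coeff (k + 1)| * w ^ (k + 1) + |P.coeff 0| * w ^ 0) := by
        rw [mul_add, mul_sum]
        have : 0 ≤ d / w * (|P.coeff 0| * w ^ 0) := by positivity
        linarith
    _ = d / w * coeffWeightedNorm w P := by
        rw [← sum_range_succ' (fun k => |P.coeff k| * w ^ k),
          coeffWeightedNorm_eq_sum_range (by omega : d < d + 1 + 1)]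

lemma abs_eval_mul_exp_neg_sq_le (hw : 0 < w) (hP : (P.natDegree : ℝ) ≤ w ^ 2) (x : ℝ) :
    |P.eval x| * exp (-x ^ 2) ≤ coeffWeightedNorm w P := by
  have hn : P.natDegree < P.natDegree + 1 := Nat.lt_succ_self _
  rw [eval_eq_sum_range' hn, coeffWeightedNorm_eq_sum_range hn]
  calc |∑ k ∈ range (P.natDegree + 1), P.coeff k * x ^ k| * exp (-x ^ 2)
      ≤ (∑ k ∈ range (P.natDegree + 1), |P.coeff k| * |x| ^ k) * exp (-x ^ 2) := by
        gcongr
        refine (abs_sum_le_sum_abs _ _).trans_eq (sum_congr rfl fun k _ => ?_)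
        rw [abs_mul, abs_pow]
    _ = ∑ k ∈ range (P.natDegree + 1), |P.coeff k| * (|x| ^ k * exp (-|x| ^ 2)) := by
        rw [sum_mul, sq_abs]; exact sum_congr rfl fun _ _ => by ring
    _ ≤ ∑ k ∈ range (P.natDegree + 1), |P.coeff k| * w ^ k := by
        gcongr with k hk
        refine pow_mul_exp_neg_sq_le hw (abs_nonneg x) (le_trans ?_ hP)
        exact_mod_cast Nat.lt_succ_iff.mp (mem_range.mp hk)

end coeffWeightedNorm

noncomputable def gaussPoly : ℕ → ℝ[X]
  | 0 => 1
  | n + 1 => derivative (gaussPoly n) - C 2 * (X * gaussPoly n)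

lemma natDegree_gaussPoly_le (n : ℕ) : (gaussPoly n).natDegree ≤ n := by
  induction n with
  | zero => simp [gaussPoly]
  | succ n ih =>
    have hder := natDegree_derivative_le (gaussPoly n)
    have hXP := natDegree_mul_le (p := (X : ℝ[X])) (q := gaussPoly n)
    have hX := natDegree_X_le (R := ℝ)
    have hCXP := natDegree_C_mul_le 2 (X * gaussPoly n)
    exact (natDegree_sub_le _ _).trans (max_le (by omega) (by omega))

lemma iteratedDeriv_exp_neg_sq (n : ℕ) :
    iteratedDeriv n (fun t : ℝ => exp (-t ^ 2)) = fun x => (gaussPoly n).eval x * exp (-x ^ 2) := by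
  induction n with
  | zero => simp [gaussPoly]
  | succ n ih =>
    ext x
    have hexp : HasDerivAt (fun x : ℝ => exp (-x ^ 2)) (-(2 * x) * exp (-x ^ 2)) x := by
      simpa [mul_comm] using ((hasDerivAt_pow 2 x).neg).exp
    rw [iteratedDeriv_succ, ih]
    refine (((gaussPoly n).hasDerivAt x).mul hexp).deriv.trans ?_
    simp only [gaussPoly, eval_sub, eval_mul, eval_C, eval_X]
    ring

lemma coeffWeightedNorm_gaussPoly_le {w : ℝ} (hw : 0 < w) {n : ℕ} (hn : (n : ℝ) ≤ w ^ 2) :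
    coeffWeightedNorm w (gaussPoly n) ≤ (3 * w) ^ n := by
  induction n with
  | zero => simp [gaussPoly, coeffWeightedNorm_eq_sum_range (n := 1)]
  | succ n ih =>
    have hn' : (n : ℝ) ≤ w ^ 2 := by push_cast at hn; linarith
    set N := coeffWeightedNorm w (gaussPoly n)
    have hN : 0 ≤ N := coeffWeightedNorm_nonneg hw.le
    have hdw : ((gaussPoly n).natDegree : ℝ) / w ≤ w := by
      rw [div_le_iff₀ hw, ← sq]
      exact le_trans (by exact_mod_cast natDegree_gaussPoly_le n) hn'
    calc coeffWeightedNorm w (gaussPoly (n + 1))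
        ≤ coeffWeightedNorm w (derivative (gaussPoly n)) + |2| * (w * N) := by
          rw [gaussPoly, ← coeffWeightedNorm_X_mul, ← coeffWeightedNorm_C_mul]
          exact coeffWeightedNorm_sub_le hw.le
      _ ≤ w * N + 2 * (w * N) := by
          gcongr
          · exact (coeffWeightedNorm_derivative_le hw).trans (by gcongr)
          · norm_num
      _ ≤ (3 * w) ^ (n + 1) := by
          rw [pow_succ]
          nlinarith [ih hn']

lemma abs_iteratedDeriv_exp_neg_sq_le {w : ℝ} (hw : 0 < w) {n : ℕ} (hn : (n : ℝ) ≤ w ^ 2)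
    (x : ℝ) : |iteratedDeriv n (fun t : ℝ => exp (-t ^ 2)) x| ≤ (3 * w) ^ n := by
  rw [iteratedDeriv_exp_neg_sq, abs_mul, abs_of_pos (exp_pos _)]
  refine (abs_eval_mul_exp_neg_sq_le hw ?_ x).trans (coeffWeightedNorm_gaussPoly_le hw hn)
  exact le_trans (by exact_mod_cast natDegree_gaussPoly_le n) hn

lemma maxDerivSup_exp_neg_sq_le {m : ℕ} (hm : 0 < m) :
    maxDerivSup (fun t : ℝ => exp (-t ^ 2)) m ≤ (18 * m) ^ m := by
  set w := √(2 * m)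
  have hw2 : w ^ 2 = 2 * m := sq_sqrt (by positivity)
  have hw : 1 ≤ w := one_le_sqrt.mpr (by norm_cast; omega)
  refine sup'_le _ _ fun p hp => ciSup_le fun x => ?_
  have hp : p ≤ 2 * m := Nat.lt_succ_iff.mp (mem_range.mp hp)
  calc |iteratedDeriv p (fun t : ℝ => exp (-t ^ 2)) x| ≤ (3 * w) ^ p :=
        abs_iteratedDeriv_exp_neg_sq_le (by positivity) (by rw [hw2]; exact_mod_cast hp) x
    _ ≤ (3 * w) ^ (2 * m) := pow_le_pow_right₀ (by linarith) hp
    _ = (18 * m) ^ m := by rw [pow_mul, mul_pow, hw2]; ring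

lemma one_le_maxDerivSup_exp_neg_sq (m : ℕ) : 1 ≤ maxDerivSup (fun t : ℝ => exp (-t ^ 2)) m := by
  have hbdd : BddAbove (Set.range fun b : ℝ => |iteratedDeriv 0 (fun t : ℝ => exp (-t ^ 2)) b|) :=
    ⟨1, Set.forall_mem_range.mpr fun b =>
      (abs_iteratedDeriv_exp_neg_sq_le one_pos (n := 0) (by norm_num) b).trans_eq (by norm_num)⟩
  refine le_trans ?_ (le_sup' _ (mem_range.mpr (Nat.succ_pos (2 * m))))
  simpa using le_ciSup hbdd 0

lemma rpow_neg_half_mul_maxDerivSup_exp_neg_sq_le {δ : ℝ} (hδ : 0 < δ) {m : ℕ}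
    (hm : 41 ≤ m) :
    (m : ℝ) ^ (-(1 : ℝ) / 2) * (3 * exp 1 / (2 * δ)) ^ (2 * m) *
        maxDerivSup (fun t : ℝ => exp (-t ^ 2)) m ≤ (3 * (m : ℝ) / δ) ^ (2 * m) := by
  have hm1 : (1 : ℝ) ≤ m := by exact_mod_cast (by omega : 1 ≤ m)
  have hM := maxDerivSup_exp_neg_sq_le (by omega : 0 < m)
  have hM0 : 0 ≤ maxDerivSup (fun t : ℝ => exp (-t ^ 2)) m :=
    zero_le_one.trans (one_le_maxDerivSup_exp_neg_sq m)
  have h18 : 18 * (m : ℝ) ≤ (2 * m / exp 1) ^ 2 := by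
    rw [div_pow, le_div_iff₀ (by positivity)]
    have he2 : exp 1 ^ 2 < 9 := by nlinarith [exp_pos 1, exp_one_lt_three]
    have hm41 : (41 : ℝ) ≤ m := by exact_mod_cast hm
    nlinarith [mul_lt_mul_of_pos_left he2 (by linarith : (0 : ℝ) < 18 * m)]
  calc (m : ℝ) ^ (-(1 : ℝ) / 2) * (3 * exp 1 / (2 * δ)) ^ (2 * m) *
        maxDerivSup (fun t : ℝ => exp (-t ^ 2)) m
      ≤ 1 * (3 * exp 1 / (2 * δ)) ^ (2 * m) * (18 * m) ^ m := by
        gcongr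
        exact rpow_le_one_of_one_le_of_nonpos hm1 (by norm_num)
    _ ≤ 1 * (3 * exp 1 / (2 * δ)) ^ (2 * m) * ((2 * m / exp 1) ^ 2) ^ m := by gcongr
    _ = (3 * (m : ℝ) / δ) ^ (2 * m) := by
        rw [one_mul, ← pow_mul, ← mul_pow]
        congr 1
        field_simp

lemma pow_le_rpow_neg_half_mul_pow_two_mul {ρ x : ℝ} {m : ℕ} (hρ : 0 < ρ) (hx : 1 ≤ x)
    (hxρ : x ≤ ρ ^ m) : ρ ^ m ≤ x ^ (-(1 : ℝ) / 2) * ρ ^ (2 * m) :=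
  calc ρ ^ m ≤ x⁻¹ * ρ ^ (2 * m) := by
        rw [two_mul, pow_add, inv_mul_eq_div, le_div_iff₀ (by positivity)]
        gcongr
    _ ≤ x ^ (-(1 : ℝ) / 2) * ρ ^ (2 * m) := by
        gcongr
        rw [← rpow_neg_one]
        exact rpow_le_rpow_of_exponent_le hx (by norm_num)

/-- For the Gaussian activation `φ(x) = exp(-x²)` and any `δ > 0`:
`(3m/δ)^{2m} ≥ C m^{-1/2} (3e/(2δ))^{2m} · max_{0 ≤ p ≤ 2m} sup_b |φ^{(p)}(b)|`
eventually in `m`; in particular for `0 < δ < 3e/2` the quotient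
`(3m/δ)^{2m} / max_{0 ≤ p ≤ 2m} sup_b |φ^{(p)}(b)|` grows at least exponentially. -/
theorem gaussian_parameter_lower_bound (δ : ℝ) (hδ : 0 < δ) :
    (∃ C : ℝ, 0 < C ∧ ∃ m₀ : ℕ, ∀ m : ℕ, m₀ ≤ m →
      C * (m : ℝ) ^ (-(1 : ℝ) / 2) * (3 * Real.exp 1 / (2 * δ)) ^ (2 * m) *
          maxDerivSup (fun t : ℝ => Real.exp (-t ^ 2)) m
        ≤ (3 * (m : ℝ) / δ) ^ (2 * m)) ∧
    (δ < 3 * Real.exp 1 / 2 →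
      ∃ ρ : ℝ, 1 < ρ ∧ ∃ C' : ℝ, 0 < C' ∧ ∃ m₀ : ℕ, ∀ m : ℕ, m₀ ≤ m →
        C' * ρ ^ m ≤ (3 * (m : ℝ) / δ) ^ (2 * m) /
          maxDerivSup (fun t : ℝ => Real.exp (-t ^ 2)) m) := by
  refine ⟨⟨1, one_pos, 41, fun m hm => ?_⟩, fun hδe => ?_⟩
  · rw [one_mul]
    exact rpow_neg_half_mul_maxDerivSup_exp_neg_sq_le hδ hm
  set ρ := 3 * exp 1 / (2 * δ)
  have hρ : 1 < ρ := by rw [lt_div_iff₀ (by positivity)]; linarith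
  obtain ⟨m₁, hm₁⟩ := Filter.eventually_atTop.mp
    ((tendsto_pow_const_div_const_pow_of_one_lt 1 hρ).eventually (ge_mem_nhds one_pos))
  refine ⟨ρ, hρ, 1, one_pos, max 41 m₁, fun m hm => ?_⟩
  have hm1 : (1 : ℝ) ≤ m := by exact_mod_cast (by omega : 1 ≤ m)
  have hmρ : (m : ℝ) ≤ ρ ^ m := by
    simpa [div_le_one (pow_pos (one_pos.trans hρ) m)] using hm₁ m (le_of_max_le_right hm)
  have hM := one_le_maxDerivSup_exp_neg_sq m
  rw [one_mul, le_div_iff₀ (by positivity)]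
  exact (mul_le_mul_of_nonneg_right (pow_le_rpow_neg_half_mul_pow_two_mul (by positivity) hm1 hmρ)
    (by positivity)).trans
    (rpow_neg_half_mul_maxDerivSup_exp_neg_sq_le hδ (le_of_max_le_left hm))
end

section
/- Let φ : ℝ → ℝ be the logistic function φ(x) = (1 + exp(−x))^{−1}. Then for every n ≥ 1, the n-th derivative of φ satisfies sup_{x ∈ ℝ} |φ^{(n)}(x)| ≤ n! / 2^{n+1}. -/
/-!
For `n ≤ 3`, write `σ⁽ⁿ⁾ = Pₙ(σ)` with `Pₙ₊₁ = Pₙ' · X(1 - X)` (because `σ' = σ(1 - σ)`) and bound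
`Pₙ` on `[0, 1]`. For `n ≥ 4`, use that `σ' = 1 / (4 cosh² (x/2))` extends holomorphically to the
strip `|Im z| < π` and is bounded by `1` on `|Im z| ≤ 2`, since `|cosh w| ≥ cos (Im w)`. Cauchy's
estimate on the disc of radius `2` about a real point gives `|σ⁽ᵏ⁺¹⁾(x)| ≤ k! / 2ᵏ`, which is at most
`(k + 1)! / 2ᵏ⁺²` as soon as `k ≥ 3`.
-/

open Real Complex Metric Set Polynomial

theorem iteratedDeriv_re_comp_ofReal {f : ℂ → ℂ} {U : Set ℂ} (hU : IsOpen U)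
    (hf : DifferentiableOn ℂ f U) (hℝ : ∀ x : ℝ, (x : ℂ) ∈ U) (n : ℕ) :
    iteratedDeriv n (fun x : ℝ => (f x).re) = fun x : ℝ => (iteratedDeriv n f x).re := by
  induction n with
  | zero => rfl
  | succ n ih =>
    have hfn : DifferentiableOn ℂ (iteratedDeriv n f) U := by
      simpa only [iteratedDeriv_eq_iterate] using
        ((hf.analyticOnNhd hU).iterated_deriv n).differentiableOn
    funext x
    rw [iteratedDeriv_succ, ih, iteratedDeriv_succ]
    exact (hfn.differentiableAt (hU.mem_nhds (hℝ x))).hasDerivAt.real_of_complex.deriv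

theorem Complex.cosh_re (z : ℂ) : (cosh z).re = Real.cosh z.re * Real.cos z.im := by
  simp only [Complex.cosh, div_ofNat_re, add_re, exp_re, neg_re, neg_im, Real.cos_neg,
    Real.cosh_eq]
  ring

theorem Complex.cos_im_le_norm_cosh (z : ℂ) : Real.cos z.im ≤ ‖cosh z‖ := by
  rcases le_or_gt 0 (Real.cos z.im) with h | h
  · calc Real.cos z.im ≤ Real.cosh z.re * Real.cos z.im := le_mul_of_one_le_left h (one_le_cosh _)
      _ = (cosh z).re := (cosh_re z).symm
      _ ≤ ‖cosh z‖ := re_le_norm _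
  · exact h.le.trans (norm_nonneg _)

theorem abs_im_le_of_mem_closedBall_ofReal {x r : ℝ} {z : ℂ} (hz : z ∈ closedBall (x : ℂ) r) :
    |z.im| ≤ r := by
  simpa using (abs_im_le_norm (z - x)).trans (mem_closedBall_iff_norm.1 hz)

noncomputable def sigmoidPoly : ℕ → ℝ[X]
  | 0 => X
  | n + 1 => derivative (sigmoidPoly n) * (X * (1 - X))

theorem iteratedDeriv_sigmoid (n : ℕ) :
    iteratedDeriv n sigmoid = fun x => (sigmoidPoly n).eval (sigmoid x) := by
  induction n with
  | zero => simp [sigmoidPoly]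
  | succ n ih =>
    rw [iteratedDeriv_succ, ih]
    funext x
    simpa [sigmoidPoly, mul_assoc, Function.comp_def] using
      (((sigmoidPoly n).hasDerivAt _).comp x (hasDerivAt_sigmoid x)).deriv

theorem abs_eval_sigmoidPoly_le {n : ℕ} (h1 : 1 ≤ n) (h3 : n ≤ 3) {p : ℝ} (hp0 : 0 ≤ p)
    (hp1 : p ≤ 1) : |(sigmoidPoly n).eval p| ≤ n.factorial / 2 ^ (n + 1) := by
  have hq : 0 ≤ p * (1 - p) := mul_nonneg hp0 (sub_nonneg.2 hp1)
  rw [abs_le]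
  interval_cases n <;>
    simp only [sigmoidPoly, derivative_X, derivative_mul, derivative_add, derivative_sub,
      derivative_one, derivative_zero, eval_mul, eval_add, eval_sub, eval_one, eval_zero, eval_X,
      Nat.factorial, Nat.succ_eq_add_one, Nat.reduceAdd, Nat.reduceMul, Nat.cast_ofNat] <;>
    constructor <;> nlinarith [sq_nonneg (2 * p - 1), mul_nonneg hq (sq_nonneg (2 * p - 1))]

noncomputable def sigmoidDerivComplex (z : ℂ) : ℂ := (4 * cosh (z / 2) ^ 2)⁻¹

theorem deriv_sigmoid_eq_re : deriv sigmoid = fun t : ℝ => (sigmoidDerivComplex t).re := by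
  rw [deriv_sigmoid]
  funext t
  have hC : sigmoidDerivComplex t = ((4 * Real.cosh (t / 2) ^ 2)⁻¹ : ℝ) := by
    push_cast [sigmoidDerivComplex, ofReal_cosh]
    rfl
  have hexp : Real.exp t = Real.exp (t / 2) ^ 2 := by rw [← Real.exp_nat_mul]; ring_nf
  rw [hC, ofReal_re, ← sigmoid_neg, sigmoid_def, sigmoid_def, Real.cosh_eq, neg_neg,
    Real.exp_neg, Real.exp_neg, hexp]
  field_simp
  ring

theorem differentiableOn_sigmoidDerivComplex :
    DifferentiableOn ℂ sigmoidDerivComplex (im ⁻¹' Ioo (-π) π) := by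
  refine DifferentiableOn.inv (by fun_prop) fun z hz => ?_
  have hcos : 0 < Real.cos (z / 2).im := Real.cos_pos_of_mem_Ioo (by
    simp only [div_ofNat_im]; constructor <;> linarith [hz.1, hz.2])
  exact mul_ne_zero (by norm_num)
    (pow_ne_zero 2 (norm_pos_iff.1 (hcos.trans_le (cos_im_le_norm_cosh _))))

theorem norm_sigmoidDerivComplex_le_one {z : ℂ} (hz : |z.im| ≤ 2) :
    ‖sigmoidDerivComplex z‖ ≤ 1 := by
  have hcos : 1 / 2 ≤ Real.cos (z / 2).im := by
    have := Real.one_sub_sq_div_two_le_cos (x := (z / 2).im)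
    simp only [div_ofNat_im] at this ⊢
    nlinarith [sq_abs z.im, abs_nonneg z.im]
  have hcosh := hcos.trans (cos_im_le_norm_cosh _)
  rw [sigmoidDerivComplex, norm_inv, norm_mul, norm_pow, Complex.norm_ofNat]
  exact inv_le_one_of_one_le₀ (by nlinarith)

theorem norm_iteratedDeriv_sigmoidDerivComplex_le (k : ℕ) (x : ℝ) :
    ‖iteratedDeriv k sigmoidDerivComplex x‖ ≤ k.factorial / 2 ^ k := by
  have hball : closedBall (x : ℂ) 2 ⊆ im ⁻¹' Ioo (-π) π := fun z hz => by
    have := abs_le.1 (abs_im_le_of_mem_closedBall_ofReal hz)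
    constructor <;> linarith [Real.pi_gt_three]
  simpa using norm_iteratedDeriv_le_of_forall_mem_sphere_norm_le k two_pos
    (differentiableOn_sigmoidDerivComplex.diffContOnCl_ball hball) fun z hz =>
      norm_sigmoidDerivComplex_le_one
        (abs_im_le_of_mem_closedBall_ofReal (sphere_subset_closedBall hz))

theorem factorial_div_two_pow_le_succ {k : ℕ} (hk : 3 ≤ k) :
    (k.factorial : ℝ) / 2 ^ k ≤ (k + 1).factorial / 2 ^ (k + 1 + 1) := by
  have hk' : (4 : ℝ) ≤ k + 1 := by exact_mod_cast Nat.succ_le_succ hk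
  calc (k.factorial : ℝ) / 2 ^ k ≤ k.factorial / 2 ^ k * ((k + 1) / 4) :=
        le_mul_of_one_le_right (by positivity) (by rwa [le_div_iff₀ four_pos, one_mul])
    _ = (k + 1).factorial / 2 ^ (k + 1 + 1) := by
        push_cast [Nat.factorial_succ]
        ring

/-- The iterated derivatives of the logistic function
`φ(x) = (1 + exp(-x))⁻¹` satisfy `sup_x |φ^{(n)}(x)| ≤ n! / 2^{n+1}` for every `n ≥ 1`. -/
theorem logistic_iterated_deriv_bound (n : ℕ) (hn : 1 ≤ n) (x : ℝ) :
    |iteratedDeriv n (fun t : ℝ => (1 + Real.exp (-t))⁻¹) x|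
      ≤ (n.factorial : ℝ) / 2 ^ (n + 1) := by
  change |iteratedDeriv n sigmoid x| ≤ _
  rcases le_or_gt n 3 with hsmall | hlarge
  · rw [iteratedDeriv_sigmoid]
    exact abs_eval_sigmoidPoly_le hn hsmall (sigmoid_nonneg x) (sigmoid_le_one x)
  obtain ⟨k, rfl⟩ : ∃ k, n = k + 1 := ⟨n - 1, by omega⟩
  have hℝ (t : ℝ) : (t : ℂ) ∈ im ⁻¹' Ioo (-π) π := by simp [pi_pos]
  rw [iteratedDeriv_succ', deriv_sigmoid_eq_re, iteratedDeriv_re_comp_ofReal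
    (isOpen_Ioo.preimage continuous_im) differentiableOn_sigmoidDerivComplex hℝ]
  calc |(iteratedDeriv k sigmoidDerivComplex x).re|
      ≤ ‖iteratedDeriv k sigmoidDerivComplex x‖ := abs_re_le_norm _
    _ ≤ k.factorial / 2 ^ k := norm_iteratedDeriv_sigmoidDerivComplex_le k x
    _ ≤ (k + 1).factorial / 2 ^ (k + 1 + 1) := factorial_div_two_pow_le_succ (by omega)
end

section
/- Let φ : ℝ → ℝ be the logistic function φ(x) = (1 + exp(−x))^{−1} and let δ > 0. Then there exist C > 0 and m₀ ∈ ℕ such that for all m ≥ m₀: (3m/δ)^{2m} ≥ C · m^{−1/2} · (3e/δ)^{2m} · max_{0 ≤ p ≤ 2m} sup_{b ∈ ℝ} |φ^{(p)}(b)|. In particular, if 0 < δ < 3e, the quantity (3m/δ)^{2m} / max_{0 ≤ p ≤ 2m} sup_{b ∈ ℝ} |φ^{(p)}(b)| grows at least exponentially in m. -/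
open Metric Real
open scoped Nat

lemma Real.neg_half_le_cos {y : ℝ} (hy : |y| ≤ 2 * π / 3) : -(1 / 2) ≤ Real.cos y := by
  have h : Real.cos (2 * π / 3) = -(1 / 2) := by
    rw [show 2 * π / 3 = π - π / 3 by ring, Real.cos_pi_sub, Real.cos_pi_div_three]
  rw [← Real.cos_abs, ← h]
  exact Real.cos_le_cos_of_nonneg_of_le_pi (abs_nonneg y) (by linarith [Real.pi_pos]) hy

lemma Complex.half_le_norm_one_add {w : ℂ} (hw : -(‖w‖ / 2) ≤ w.re) : 1 / 2 ≤ ‖1 + w‖ := by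
  have hsq : ‖1 + w‖ ^ 2 = 1 + 2 * w.re + ‖w‖ ^ 2 := by
    rw [Complex.sq_norm, Complex.sq_norm, Complex.normSq_apply, Complex.normSq_apply]
    simp only [Complex.add_re, Complex.add_im, Complex.one_re, Complex.one_im]
    ring
  nlinarith [norm_nonneg (1 + w), sq_nonneg (‖w‖ - 1 / 2)]

lemma Complex.half_le_norm_one_add_exp_neg {z : ℂ} (hz : |z.im| ≤ 2) :
    1 / 2 ≤ ‖1 + Complex.exp (-z)‖ := by
  apply Complex.half_le_norm_one_add
  have hcos : -(1 / 2) ≤ Real.cos z.im :=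
    Real.neg_half_le_cos (by linarith [Real.pi_gt_three])
  rw [Complex.norm_exp, Complex.exp_re, Complex.neg_re, Complex.neg_im, Real.cos_neg]
  nlinarith [Real.exp_pos (-z.re)]

lemma Complex.one_add_exp_neg_ne_zero {z : ℂ} (hz : |z.im| ≤ 2) : 1 + Complex.exp (-z) ≠ 0 :=
  norm_pos_iff.1 <|
    (by norm_num : (0 : ℝ) < 1 / 2).trans_le (Complex.half_le_norm_one_add_exp_neg hz)

noncomputable def Complex.sigmoid (z : ℂ) : ℂ := (1 + Complex.exp (-z))⁻¹

lemma Complex.sigmoid_ofReal (x : ℝ) : Complex.sigmoid x = Real.sigmoid x := by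
  simp [Complex.sigmoid, Real.sigmoid, Complex.ofReal_exp]

lemma Complex.differentiableAt_sigmoid {z : ℂ} (hz : 1 + Complex.exp (-z) ≠ 0) :
    DifferentiableAt ℂ Complex.sigmoid z :=
  ((differentiableAt_id.neg.cexp).const_add 1).inv hz

lemma Complex.norm_sigmoid_le {z : ℂ} (hz : |z.im| ≤ 2) : ‖Complex.sigmoid z‖ ≤ 2 := by
  rw [Complex.sigmoid, norm_inv]
  simpa using inv_anti₀ (by norm_num) (Complex.half_le_norm_one_add_exp_neg hz)

lemma Complex.abs_im_le_of_mem_closedBall {x : ℝ} {r : ℝ} {z : ℂ}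
    (hz : z ∈ closedBall (x : ℂ) r) : |z.im| ≤ r := by
  simpa using (Complex.abs_im_le_norm (z - x)).trans (mem_closedBall_iff_norm.1 hz)

lemma Complex.norm_iteratedDeriv_sigmoid_le (n : ℕ) (x : ℝ) :
    ‖iteratedDeriv n Complex.sigmoid x‖ ≤ n ! * 2 / 2 ^ n := by
  have hU : DifferentiableOn ℂ Complex.sigmoid {z | |z.im| ≤ 2} := fun z hz =>
    (Complex.differentiableAt_sigmoid (Complex.one_add_exp_neg_ne_zero hz)).differentiableWithinAt
  refine Complex.norm_iteratedDeriv_le_of_forall_mem_sphere_norm_le n two_pos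
    (hU.diffContOnCl_ball fun z hz => Complex.abs_im_le_of_mem_closedBall hz) fun z hz => ?_
  exact Complex.norm_sigmoid_le (Complex.abs_im_le_of_mem_closedBall (sphere_subset_closedBall hz))

lemma Complex.analyticAt_sigmoid_ofReal (x : ℝ) : AnalyticAt ℂ Complex.sigmoid x := by
  have hopen : IsOpen {z : ℂ | 1 + Complex.exp (-z) ≠ 0} :=
    isOpen_ne_fun (by fun_prop) continuous_const
  exact DifferentiableOn.analyticAt
    (fun z hz => (Complex.differentiableAt_sigmoid hz).differentiableWithinAt)
    (hopen.mem_nhds (Complex.one_add_exp_neg_ne_zero (by simp)))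

lemma iteratedDeriv_re_ofReal {e : ℂ → ℂ} (he : ∀ x : ℝ, AnalyticAt ℂ e x) (n : ℕ) :
    iteratedDeriv n (fun x : ℝ => (e x).re) = fun x : ℝ => (iteratedDeriv n e x).re := by
  induction n with
  | zero => simp
  | succ n ih =>
    ext x
    rw [iteratedDeriv_succ, iteratedDeriv_succ, ih]
    have hdiff : DifferentiableAt ℂ (iteratedDeriv n e) x := by
      rw [iteratedDeriv_eq_iterate]
      exact ((he x).iterated_deriv n).differentiableAt
    exact hdiff.hasDerivAt.real_of_complex.deriv

lemma Real.abs_iteratedDeriv_sigmoid_le (n : ℕ) (x : ℝ) :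
    |iteratedDeriv n Real.sigmoid x| ≤ 2 * (n ! / 2 ^ n) := by
  have h : Real.sigmoid = fun x : ℝ => (Complex.sigmoid x).re := by
    ext x; simp [Complex.sigmoid_ofReal]
  rw [h, iteratedDeriv_re_ofReal Complex.analyticAt_sigmoid_ofReal]
  exact (Complex.abs_re_le_norm _).trans
    ((Complex.norm_iteratedDeriv_sigmoid_le n x).trans_eq (by ring))

lemma Nat.factorial_mul_two_pow_le (p k : ℕ) : p ! * 2 ^ k ≤ 2 * (p + k)! := by
  cases p with
  | zero =>
    cases k with
    | zero => simp
    | succ k =>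
      calc 0 ! * 2 ^ (k + 1) = 2 * (1 ! * (1 + 1) ^ k) := by simp [pow_succ, mul_comm]
        _ ≤ 2 * (0 + (k + 1))! := by
          rw [show 0 + (k + 1) = 1 + k by omega]
          exact Nat.mul_le_mul_left 2 Nat.factorial_mul_pow_le_factorial
  | succ p =>
    calc (p + 1)! * 2 ^ k ≤ (p + 1)! * (p + 1 + 1) ^ k := by gcongr; omega
      _ ≤ (p + 1 + k)! := Nat.factorial_mul_pow_le_factorial
      _ ≤ 2 * (p + 1 + k)! := by omega

lemma factorial_div_two_pow_le {p q : ℕ} (h : p ≤ q) :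
    (p ! : ℝ) / 2 ^ p ≤ 2 * (q ! / 2 ^ q) := by
  obtain ⟨k, rfl⟩ := Nat.exists_eq_add_of_le h
  rw [div_le_iff₀ (by positivity), pow_add]
  field_simp
  exact_mod_cast Nat.factorial_mul_two_pow_le p k

lemma Stirling.factorial_le_exp_one_mul_sqrt {n : ℕ} (hn : n ≠ 0) :
    (n ! : ℝ) ≤ exp 1 * √n * (n / exp 1) ^ n := by
  obtain ⟨k, rfl⟩ := Nat.exists_eq_succ_of_ne_zero hn
  have hseq : Stirling.stirlingSeq (k + 1) ≤ exp 1 / √2 := by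
    simpa [Stirling.stirlingSeq_one] using Stirling.stirlingSeq'_antitone (Nat.zero_le k)
  have hfac : ((k + 1)! : ℝ) = Stirling.stirlingSeq (k + 1) * (√2 * √(k + 1 : ℕ) *
      ((k + 1 : ℕ) / exp 1) ^ (k + 1)) := by
    rw [Stirling.stirlingSeq, ← Real.sqrt_mul zero_le_two]
    field_simp
  rw [Nat.succ_eq_add_one, hfac]
  calc _ ≤ exp 1 / √2 * (√2 * √(k + 1 : ℕ) * ((k + 1 : ℕ) / exp 1) ^ (k + 1)) := by
        gcongr
    _ = _ := by field_simp

lemma maxDerivSup_le {f : ℝ → ℝ} {m : ℕ} {B : ℝ}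
    (h : ∀ p ≤ 2 * m, ∀ b, |iteratedDeriv p f b| ≤ B) : maxDerivSup f m ≤ B :=
  Finset.sup'_le _ _ fun p hp =>
    ciSup_le (h p (Nat.lt_succ_iff.1 (Finset.mem_range.1 hp)))

lemma abs_iteratedDeriv_le_maxDerivSup {f : ℝ → ℝ} {m p : ℕ} (hp : p ≤ 2 * m)
    (hbdd : BddAbove (Set.range fun b => |iteratedDeriv p f b|)) (b : ℝ) :
    |iteratedDeriv p f b| ≤ maxDerivSup f m :=
  (le_ciSup hbdd b).trans
    (Finset.le_sup' (fun p => ⨆ b, |iteratedDeriv p f b|)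
      (Finset.mem_range.2 (show p < 2 * m + 1 by omega)))

lemma half_le_maxDerivSup_sigmoid (m : ℕ) : 1 / 2 ≤ maxDerivSup Real.sigmoid m := by
  have hbdd : BddAbove (Set.range fun b => |iteratedDeriv 0 Real.sigmoid b|) :=
    ⟨_, Set.forall_mem_range.2 (Real.abs_iteratedDeriv_sigmoid_le 0)⟩
  simpa [Real.sigmoid_zero] using abs_iteratedDeriv_le_maxDerivSup (Nat.zero_le _) hbdd 0

lemma maxDerivSup_sigmoid_le {m : ℕ} (hm : m ≠ 0) :
    maxDerivSup Real.sigmoid m ≤ 4 * √2 * exp 1 * √m * (m / exp 1) ^ (2 * m) := by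
  refine maxDerivSup_le fun p hp b => ?_
  calc |iteratedDeriv p Real.sigmoid b| ≤ 2 * (p ! / 2 ^ p) :=
        Real.abs_iteratedDeriv_sigmoid_le p b
    _ ≤ 2 * (2 * ((2 * m)! / 2 ^ (2 * m))) := by gcongr; exact factorial_div_two_pow_le hp
    _ ≤ 2 * (2 * (exp 1 * √(2 * m : ℕ) * ((2 * m : ℕ) / exp 1) ^ (2 * m) / 2 ^ (2 * m))) := by
        gcongr
        exact Stirling.factorial_le_exp_one_mul_sqrt (by omega)
    _ = _ := by
        push_cast
        rw [Real.sqrt_mul zero_le_two, show (2 * m : ℝ) / exp 1 = 2 * (m / exp 1) by ring, mul_pow]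
        field_simp
        norm_num

lemma scaled_maxDerivSup_sigmoid_le (δ : ℝ) {m : ℕ} (hm : m ≠ 0) :
    (4 * √2 * exp 1)⁻¹ * (√m)⁻¹ * (3 * exp 1 / δ) ^ (2 * m) * maxDerivSup Real.sigmoid m ≤
      (3 * (m : ℝ) / δ) ^ (2 * m) := by
  have hsplit : (3 * (m : ℝ) / δ) ^ (2 * m) =
      (3 * exp 1 / δ) ^ (2 * m) * (m / exp 1) ^ (2 * m) := by
    rw [← mul_pow]
    field_simp
  have hpow : 0 ≤ (3 * exp 1 / δ) ^ (2 * m) := (even_two_mul m).pow_nonneg _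
  calc _ ≤ (4 * √2 * exp 1)⁻¹ * (√m)⁻¹ * (3 * exp 1 / δ) ^ (2 * m) *
        (4 * √2 * exp 1 * √m * (m / exp 1) ^ (2 * m)) := by
        gcongr
        exact maxDerivSup_sigmoid_le hm
    _ = (3 * (m : ℝ) / δ) ^ (2 * m) := by
        rw [hsplit]
        field_simp

lemma eventually_sqrt_le_pow {ρ : ℝ} (hρ : 1 < ρ) : ∀ᶠ m : ℕ in Filter.atTop, √m ≤ ρ ^ m := by
  filter_upwards [(tendsto_pow_const_div_const_pow_of_one_lt 1 hρ).eventually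
    (gt_mem_nhds one_pos), Filter.eventually_ne_atTop 0] with m hlt hm
  have hle : (m : ℝ) ≤ ρ ^ m := by
    simpa using (div_lt_one (pow_pos (zero_lt_one.trans hρ) m)).1 hlt |>.le
  exact (Real.sqrt_le_self_iff.2 (Or.inr (mod_cast Nat.one_le_iff_ne_zero.2 hm))).trans hle

/-- For the logistic activation `φ(x) = (1 + exp(-x))⁻¹` and any
`δ > 0`: `(3m/δ)^{2m} ≥ C m^{-1/2} (3e/δ)^{2m} · max_{0 ≤ p ≤ 2m} sup_b |φ^{(p)}(b)|`
eventually in `m`; in particular for `0 < δ < 3e` the quotient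
`(3m/δ)^{2m} / max_{0 ≤ p ≤ 2m} sup_b |φ^{(p)}(b)|` grows at least exponentially. -/
theorem logistic_parameter_lower_bound (δ : ℝ) (hδ : 0 < δ) :
    (∃ C : ℝ, 0 < C ∧ ∃ m₀ : ℕ, ∀ m : ℕ, m₀ ≤ m →
      C * (m : ℝ) ^ (-(1 : ℝ) / 2) * (3 * Real.exp 1 / δ) ^ (2 * m) *
          maxDerivSup (fun t : ℝ => (1 + Real.exp (-t))⁻¹) m
        ≤ (3 * (m : ℝ) / δ) ^ (2 * m)) ∧
    (δ < 3 * Real.exp 1 →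
      ∃ ρ : ℝ, 1 < ρ ∧ ∃ C' : ℝ, 0 < C' ∧ ∃ m₀ : ℕ, ∀ m : ℕ, m₀ ≤ m →
        C' * ρ ^ m ≤ (3 * (m : ℝ) / δ) ^ (2 * m) /
          maxDerivSup (fun t : ℝ => (1 + Real.exp (-t))⁻¹) m) := by
  have hrpow (m : ℕ) : (m : ℝ) ^ (-(1 : ℝ) / 2) = (√m)⁻¹ := by
    rw [neg_div, Real.rpow_neg m.cast_nonneg, Real.sqrt_eq_rpow]
  simp only [← Real.sigmoid_def, hrpow]
  refine ⟨⟨_, by positivity, 1, fun m hm => scaled_maxDerivSup_sigmoid_le δ (by omega)⟩,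
    fun hδ3 => ?_⟩
  set ρ := 3 * exp 1 / δ
  have hρ : 1 < ρ := (one_lt_div hδ).2 hδ3
  obtain ⟨m₀, hm₀⟩ := Filter.eventually_atTop.1 (eventually_sqrt_le_pow hρ)
  refine ⟨ρ, hρ, (4 * √2 * exp 1)⁻¹, by positivity, max m₀ 1, fun m hm => ?_⟩
  have hmaxDerivSup := (one_half_pos).trans_le (half_le_maxDerivSup_sigmoid m)
  have hgrowth : ρ ^ m ≤ (√m)⁻¹ * ρ ^ (2 * m) := by
    rw [two_mul, pow_add, le_inv_mul_iff₀ (Real.sqrt_pos.2 (Nat.cast_pos.2 (by omega)))]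
    exact mul_le_mul_of_nonneg_right (hm₀ m (le_of_max_le_left hm)) (by positivity)
  rw [le_div_iff₀ hmaxDerivSup]
  calc _ ≤ (4 * √2 * exp 1)⁻¹ * ((√m)⁻¹ * ρ ^ (2 * m)) * maxDerivSup Real.sigmoid m := by
        gcongr
    _ ≤ _ := by
        rw [← mul_assoc]
        exact scaled_maxDerivSup_sigmoid_le δ (by omega)
end

section
/- There exists a universal constant C > 0 such that for all N, L ∈ ℕ there exists a ReLU feed-forward neural network φ of width at most 3N and depth at most L with sup_{x ∈ [0,1]} |φ(x) − x²| ≤ N^{−L}, and such that φ admits a representation all of whose parameters are bounded in absolute value by C·N. -/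
/-- Evaluation of a fully connected feed-forward ReLU network with input dimension `d`,
hidden width `W`, input affine map `(A₀, b₀)`, hidden affine maps `hidden`, and output
affine map `(Aout, bout)`; `ReLU(t) = max t 0` is applied componentwise after each
affine map except the last. -/
noncomputable def netEval {d W : ℕ} (A₀ : Matrix (Fin W) (Fin d) ℝ) (b₀ : Fin W → ℝ)
    (hidden : List (Matrix (Fin W) (Fin W) ℝ × (Fin W → ℝ)))
    (Aout : Fin W → ℝ) (bout : ℝ) (x : Fin d → ℝ) : ℝ :=
  (∑ i, Aout i *
    (hidden.foldl (fun v p => fun i => max ((p.1.mulVec v + p.2) i) 0)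
      (fun i => max ((A₀.mulVec x + b₀) i) 0)) i) + bout

/-- `IsReluNet f Wd Dp B`: the function `f : ℝ^d → ℝ` is realized by a fully connected
feed-forward ReLU network of width at most `Wd`, depth (number of hidden layers) at
most `Dp`, all of whose parameters (matrix entries and biases) are bounded in absolute
value by `B`. -/
def IsReluNet {d : ℕ} (f : (Fin d → ℝ) → ℝ) (Wd Dp B : ℝ) : Prop :=
  ∃ (W : ℕ) (A₀ : Matrix (Fin W) (Fin d) ℝ) (b₀ : Fin W → ℝ)
    (hidden : List (Matrix (Fin W) (Fin W) ℝ × (Fin W → ℝ)))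
    (Aout : Fin W → ℝ) (bout : ℝ),
    (W : ℝ) ≤ Wd ∧ ((hidden.length : ℝ) + 1) ≤ Dp ∧
    (∀ i j, |A₀ i j| ≤ B) ∧ (∀ i, |b₀ i| ≤ B) ∧
    (∀ p ∈ hidden, (∀ i j, |p.1 i j| ≤ B) ∧ (∀ i, |p.2 i| ≤ B)) ∧
    (∀ i, |Aout i| ≤ B) ∧ |bout| ≤ B ∧
    ∀ x, f x = netEval A₀ b₀ hidden Aout bout x

/-! Write `f(u) = u - u²`, let `T` be the sawtooth with `N` teeth and `I` the piecewise linear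
interpolant of `f` at the nodes `k/N`; both are sums of `N` ReLUs. On each piece `[j/N, (j+1)/N]`
the interpolation error is `f(u) - I(u) = (u - j/N)((j+1)/N - u) = f(T u) / N²`, so by telescoping
`x² = x - ∑_{t<L} N^{-2t} I(Tᵗ x) - N^{-2L} f(Tᴸ x)`, and `0 ≤ f ≤ 1/4` bounds the last term.
A network of width `N + 2` evaluates the sum layer by layer: `N` neurons hold `ReLU(Tᵗ x - k/N)`,
from which the next layer forms both `T^{t+1} x - k/N` and `I(Tᵗ x)`; one neuron carries `x` and
one accumulates the sum. All weights are bounded by `2N`. -/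

noncomputable section

namespace SquareApprox

open Finset Function

/-- Linear on each `[j/N, (j+1)/N]`, with slope `∑_{k ≤ j} c k` there. -/
def reluSum (N : ℕ) (c : ℕ → ℝ) (u : ℝ) : ℝ :=
  ∑ k ∈ range N, c k * max (u - k / N) 0

def sawtoothCoeff (N k : ℕ) : ℝ :=
  if k = 0 then N else (-1) ^ k * (2 * N)

def interpCoeff (N k : ℕ) : ℝ :=
  if k = 0 then 1 - 1 / N else -(2 / N)

/-- The sawtooth with `N` teeth, rising from `0` to `1` on `[j/N, (j+1)/N]` for even `j` and
falling back for odd `j`. -/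
def sawtooth (N : ℕ) : ℝ → ℝ := reluSum N (sawtoothCoeff N)

/-- The piecewise linear interpolant of `u ↦ u - u²` at the nodes `k/N`. -/
def interp (N : ℕ) : ℝ → ℝ := reluSum N (interpCoeff N)

theorem reluSum_eq_on_piece {N j : ℕ} (c : ℕ → ℝ) (hj : j < N) {u : ℝ}
    (hu : N * u - j ∈ Set.Icc (0 : ℝ) 1) :
    reluSum N c u = ∑ k ∈ range (j + 1), c k * (u - k / N) := by
  have hN : (0 : ℝ) < N := by exact_mod_cast (Nat.zero_le j).trans_lt hj
  have hinactive : ∀ k ∈ range N, k ∉ range (j + 1) → c k * max (u - k / N) 0 = 0 := by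
    intro k _ hk
    have hk : (j : ℝ) + 1 ≤ k := by exact_mod_cast not_lt.mp (mem_range.not.mp hk)
    have : u ≤ k / N := (le_div_iff₀ hN).mpr (by linarith [hu.2])
    rw [max_eq_right (by linarith), mul_zero]
  have hactive : ∀ k ∈ range (j + 1), c k * max (u - k / N) 0 = c k * (u - k / N) := by
    intro k hk
    have hk : (k : ℝ) ≤ j := by exact_mod_cast Nat.lt_succ_iff.mp (mem_range.mp hk)
    have : k / N ≤ u := (div_le_iff₀ hN).mpr (by linarith [hu.1])
    rw [max_eq_left (by linarith)]
  rw [reluSum, ← sum_subset (range_subset_range.mpr hj) hinactive, sum_congr rfl hactive]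

theorem exists_piece {N : ℕ} (hN : 1 ≤ N) {u : ℝ} (hu : u ∈ Set.Icc (0 : ℝ) 1) :
    ∃ j < N, N * u - j ∈ Set.Icc (0 : ℝ) 1 := by
  have hN' : (1 : ℝ) ≤ N := by exact_mod_cast hN
  have hNu : 0 ≤ N * u := by nlinarith [hu.1]
  rcases hu.2.lt_or_eq with hu1 | rfl
  · refine ⟨⌊N * u⌋₊, (Nat.floor_lt hNu).mpr (by nlinarith), ?_, ?_⟩
    · linarith [Nat.floor_le hNu]
    · linarith [Nat.lt_floor_add_one (N * u)]
  · refine ⟨N - 1, by omega, ?_⟩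
    push_cast [Nat.cast_sub hN]
    constructor <;> linarith

theorem sum_sawtoothCoeff {N : ℕ} (hN : (N : ℝ) ≠ 0) (u : ℝ) (j : ℕ) :
    ∑ k ∈ range (j + 1), sawtoothCoeff N k * (u - k / N) =
      if Even j then N * u - j else j + 1 - N * u := by
  induction j with
  | zero => simp [sawtoothCoeff]
  | succ m ih =>
    rw [sum_range_succ, ih, sawtoothCoeff, if_neg m.succ_ne_zero]
    rcases Nat.even_or_odd m with hm | hm
    · rw [if_pos hm, if_neg (Nat.not_even_iff_odd.mpr hm.add_one), hm.add_one.neg_one_pow]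
      push_cast
      field_simp
      ring
    · rw [if_neg (Nat.not_even_iff_odd.mpr hm), if_pos hm.add_one, hm.add_one.neg_one_pow]
      push_cast
      field_simp
      ring

theorem sum_interpCoeff {N : ℕ} (hN : (N : ℝ) ≠ 0) (u : ℝ) (j : ℕ) :
    ∑ k ∈ range (j + 1), interpCoeff N k * (u - k / N) =
      u - u ^ 2 - (N * u - j) * (j + 1 - N * u) / N ^ 2 := by
  induction j with
  | zero => simp [interpCoeff]; field_simp; ring
  | succ m ih =>
    rw [sum_range_succ, ih, interpCoeff, if_neg m.succ_ne_zero]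
    push_cast
    field_simp
    ring

theorem sawtooth_eq_on_piece {N j : ℕ} (hj : j < N) {u : ℝ}
    (hu : N * u - j ∈ Set.Icc (0 : ℝ) 1) :
    sawtooth N u = if Even j then N * u - j else j + 1 - N * u := by
  have hN : (N : ℝ) ≠ 0 := by exact_mod_cast ((Nat.zero_le j).trans_lt hj).ne'
  rw [sawtooth, reluSum_eq_on_piece _ hj hu, sum_sawtoothCoeff hN]

theorem interp_eq_on_piece {N j : ℕ} (hj : j < N) {u : ℝ}
    (hu : N * u - j ∈ Set.Icc (0 : ℝ) 1) :
    interp N u = u - u ^ 2 - (N * u - j) * (j + 1 - N * u) / N ^ 2 := by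
  have hN : (N : ℝ) ≠ 0 := by exact_mod_cast ((Nat.zero_le j).trans_lt hj).ne'
  rw [interp, reluSum_eq_on_piece _ hj hu, sum_interpCoeff hN]

theorem sawtooth_mem_Icc_and_interp_eq {N : ℕ} (hN : 1 ≤ N) {u : ℝ}
    (hu : u ∈ Set.Icc (0 : ℝ) 1) :
    sawtooth N u ∈ Set.Icc (0 : ℝ) 1 ∧
      interp N u = u - u ^ 2 - (sawtooth N u - sawtooth N u ^ 2) / N ^ 2 := by
  obtain ⟨j, hj, ht⟩ := exists_piece hN hu
  rw [interp_eq_on_piece hj ht, sawtooth_eq_on_piece hj ht]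
  split_ifs
  · exact ⟨ht, by ring⟩
  · exact ⟨⟨by linarith [ht.2], by linarith [ht.1]⟩, by ring⟩

theorem sawtooth_mapsTo {N : ℕ} (hN : 1 ≤ N) :
    Set.MapsTo (sawtooth N) (Set.Icc 0 1) (Set.Icc 0 1) :=
  fun _ hu => (sawtooth_mem_Icc_and_interp_eq hN hu).1

theorem interp_eq {N : ℕ} (hN : 1 ≤ N) {u : ℝ} (hu : u ∈ Set.Icc (0 : ℝ) 1) :
    interp N u = u - u ^ 2 - (sawtooth N u - sawtooth N u ^ 2) / N ^ 2 :=
  (sawtooth_mem_Icc_and_interp_eq hN hu).2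

/-- The interpolant of the nonnegative `u - u²` is a convex combination of its nonnegative
values at the two nodes around `u`. -/
theorem interp_nonneg {N : ℕ} (hN : 1 ≤ N) {u : ℝ} (hu : u ∈ Set.Icc (0 : ℝ) 1) :
    0 ≤ interp N u := by
  obtain ⟨j, hj, ht⟩ := exists_piece hN hu
  have hjN : (j : ℝ) + 1 ≤ N := by exact_mod_cast hj
  have hconvex : interp N u * N ^ 2 =
      (1 - (N * u - j)) * (j * (N - j)) + (N * u - j) * ((j + 1) * (N - j - 1)) := by
    rw [interp_eq_on_piece hj ht]
    field_simp
    ring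
  refine nonneg_of_mul_nonneg_left ?_ (by positivity : (0 : ℝ) < N ^ 2)
  rw [hconvex]
  have hj0 : (0 : ℝ) ≤ j := j.cast_nonneg
  exact add_nonneg (mul_nonneg (by linarith [ht.2]) (mul_nonneg hj0 (by linarith)))
    (mul_nonneg ht.1 (mul_nonneg (by linarith) (by linarith)))

def partialSum (N : ℕ) (x : ℝ) (s : ℕ) : ℝ :=
  ∑ t ∈ range s, ((N : ℝ) ^ 2)⁻¹ ^ t * interp N ((sawtooth N)^[t] x)

theorem partialSum_succ (N : ℕ) (x : ℝ) (s : ℕ) :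
    partialSum N x (s + 1) =
      partialSum N x s + ((N : ℝ) ^ 2)⁻¹ ^ s * interp N ((sawtooth N)^[s] x) :=
  sum_range_succ _ _

theorem partialSum_eq {N : ℕ} (hN : 1 ≤ N) {x : ℝ} (hx : x ∈ Set.Icc (0 : ℝ) 1) (s : ℕ) :
    partialSum N x s =
      x - x ^ 2 - ((N : ℝ) ^ 2)⁻¹ ^ s * ((sawtooth N)^[s] x - ((sawtooth N)^[s] x) ^ 2) := by
  induction s with
  | zero => simp [partialSum]
  | succ s ih =>
    rw [partialSum_succ, ih, interp_eq hN ((sawtooth_mapsTo hN).iterate s hx),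
      iterate_succ_apply', pow_succ, div_eq_mul_inv]
    ring

theorem partialSum_nonneg {N : ℕ} (hN : 1 ≤ N) {x : ℝ} (hx : x ∈ Set.Icc (0 : ℝ) 1) (s : ℕ) :
    0 ≤ partialSum N x s :=
  sum_nonneg fun t _ =>
    mul_nonneg (by positivity) (interp_nonneg hN ((sawtooth_mapsTo hN).iterate t hx))

theorem abs_sub_partialSum_sub_sq_le {N : ℕ} (hN : 1 ≤ N) {x : ℝ}
    (hx : x ∈ Set.Icc (0 : ℝ) 1) (s : ℕ) :
    |x - partialSum N x s - x ^ 2| ≤ (N : ℝ) ^ (-(s : ℝ)) := by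
  have hN' : (1 : ℝ) ≤ N := by exact_mod_cast hN
  have hq : ((N : ℝ) ^ 2)⁻¹ ≤ (N : ℝ)⁻¹ := inv_anti₀ (by positivity) (by nlinarith)
  have hqs : ((N : ℝ) ^ 2)⁻¹ ^ s ≤ (N : ℝ)⁻¹ ^ s := pow_le_pow_left₀ (by positivity) hq s
  obtain ⟨hu0, hu1⟩ := (sawtooth_mapsTo hN).iterate s hx
  rw [partialSum_eq hN hx, Real.rpow_neg (by positivity), Real.rpow_natCast]
  set u := (sawtooth N)^[s] x
  rw [show x - (x - x ^ 2 - ((N : ℝ) ^ 2)⁻¹ ^ s * (u - u ^ 2)) - x ^ 2 =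
      ((N : ℝ) ^ 2)⁻¹ ^ s * (u - u ^ 2) by ring,
    abs_of_nonneg (mul_nonneg (by positivity) (by nlinarith))]
  calc ((N : ℝ) ^ 2)⁻¹ ^ s * (u - u ^ 2) ≤ (N : ℝ)⁻¹ ^ s * 1 :=
        mul_le_mul hqs (by nlinarith) (by nlinarith) (by positivity)
    _ = ((N : ℝ) ^ s)⁻¹ := by rw [mul_one, inv_pow]

def reluLayer {W : ℕ} (p : Matrix (Fin W) (Fin W) ℝ × (Fin W → ℝ)) (v : Fin W → ℝ) :
    Fin W → ℝ :=
  fun i => max ((p.1.mulVec v + p.2) i) 0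

theorem netEval_map_range {d W : ℕ} (A₀ : Matrix (Fin W) (Fin d) ℝ) (b₀ : Fin W → ℝ)
    (layer : ℕ → Matrix (Fin W) (Fin W) ℝ × (Fin W → ℝ)) (Aout : Fin W → ℝ) (bout : ℝ)
    (x : Fin d → ℝ) (v : ℕ → Fin W → ℝ) (h₀ : (fun i => max ((A₀.mulVec x + b₀) i) 0) = v 0)
    (hstep : ∀ p, reluLayer (layer p) (v p) = v (p + 1)) (m : ℕ) :
    netEval A₀ b₀ ((List.range m).map layer) Aout bout x = ∑ i, Aout i * v m i + bout := by
  suffices ((List.range m).map layer).foldl (fun v p => reluLayer p v) (v 0) = v m by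
    rw [netEval, h₀]
    exact congrArg (fun w => ∑ i, Aout i * w i + bout) this
  induction m with
  | zero => rfl
  | succ m ih =>
    rw [List.range_succ, List.map_append, List.foldl_append, ih]
    exact hstep m

theorem sum_fin_add_two {M : Type*} [AddCommMonoid M] (N : ℕ) (f : ℕ → M) :
    ∑ i : Fin (N + 2), f i = ∑ k ∈ range N, f k + f N + f (N + 1) := by
  rw [Fin.sum_univ_eq_sum_range, sum_range_succ, sum_range_succ]

def stateEntry (N : ℕ) (x : ℝ) (s k : ℕ) : ℝ :=
  if k < N then max ((sawtooth N)^[s] x - k / N) 0 else if k = N then x else partialSum N x s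

def hiddenEntry (N p i j : ℕ) : ℝ :=
  if i < N then (if j < N then sawtoothCoeff N j else 0)
  else if i = N then (if j = N then 1 else 0)
  else if j < N then ((N : ℝ) ^ 2)⁻¹ ^ p * interpCoeff N j
  else if j = N + 1 then 1 else 0

def outputEntry (N L k : ℕ) : ℝ :=
  if k < N then -(((N : ℝ) ^ 2)⁻¹ ^ (L - 1) * interpCoeff N k) else if k = N then 1 else -1

def inputWeight (N : ℕ) : Matrix (Fin (N + 2)) (Fin 1) ℝ :=
  Matrix.of fun i _ => if (i : ℕ) = N + 1 then 0 else 1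

def bias (N : ℕ) : Fin (N + 2) → ℝ := fun i => if (i : ℕ) < N then -(i / N) else 0

def hiddenWeight (N p : ℕ) : Matrix (Fin (N + 2)) (Fin (N + 2)) ℝ :=
  Matrix.of fun i j => hiddenEntry N p i j

def outputWeight (N L : ℕ) : Fin (N + 2) → ℝ := fun i => outputEntry N L i

def squareNet (N L : ℕ) : (Fin 1 → ℝ) → ℝ :=
  netEval (inputWeight N) (bias N) ((List.range (L - 1)).map fun p => (hiddenWeight N p, bias N))
    (outputWeight N L) 0

theorem sum_mul_stateEntry (N : ℕ) (x : ℝ) (s : ℕ) (c : ℕ → ℝ) :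
    ∑ k ∈ range N, c k * stateEntry N x s k = reluSum N c ((sawtooth N)^[s] x) :=
  sum_congr rfl fun k hk => by rw [stateEntry, if_pos (mem_range.mp hk)]

theorem inputLayer_eq {N : ℕ} {x : ℝ} (hx : 0 ≤ x) :
    (fun i => max (((inputWeight N).mulVec (fun _ => x) + bias N) i) 0) =
      fun i : Fin (N + 2) => stateEntry N x 0 i := by
  funext i
  obtain hi | hi | hi : (i : ℕ) < N ∨ (i : ℕ) = N ∨ (i : ℕ) = N + 1 := by omega
  · have hne : (i : ℕ) ≠ N + 1 := by omega
    simp [Matrix.mulVec, dotProduct, inputWeight, bias, stateEntry, hi, hne, sub_eq_add_neg]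
  · simp [Matrix.mulVec, dotProduct, inputWeight, bias, stateEntry, hi, hx]
  · simp [Matrix.mulVec, dotProduct, inputWeight, bias, stateEntry, hi, partialSum]

theorem mulVec_of_apply {N : ℕ} (M : ℕ → ℕ → ℝ) (v : ℕ → ℝ) (i : Fin (N + 2)) :
    (Matrix.of fun (i j : Fin (N + 2)) => M i j).mulVec (fun j => v j) i =
      ∑ k ∈ range N, M i k * v k + M i N * v N + M i (N + 1) * v (N + 1) :=
  sum_fin_add_two N fun k => M i k * v k

theorem hiddenLayer_eq {N : ℕ} (hN : 1 ≤ N) {x : ℝ} (hx : x ∈ Set.Icc (0 : ℝ) 1) (p : ℕ) :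
    reluLayer (hiddenWeight N p, bias N) (fun i : Fin (N + 2) => stateEntry N x p i) =
      fun i : Fin (N + 2) => stateEntry N x (p + 1) i := by
  funext i
  simp only [reluLayer, Pi.add_apply, hiddenWeight]
  rw [mulVec_of_apply]
  obtain hi | hi | hi : (i : ℕ) < N ∨ (i : ℕ) = N ∨ (i : ℕ) = N + 1 := by omega
  · have hsaw : ∑ k ∈ range N, hiddenEntry N p i k * stateEntry N x p k =
        sawtooth N ((sawtooth N)^[p] x) := by
      refine (sum_congr rfl fun k hk => ?_).trans (sum_mul_stateEntry N x p _)
      rw [hiddenEntry, if_pos hi, if_pos (mem_range.mp hk)]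
    rw [hsaw]
    simp [hiddenEntry, hi, stateEntry, bias, iterate_succ_apply', sub_eq_add_neg]
  · have hzero : ∑ k ∈ range N, hiddenEntry N p i k * stateEntry N x p k = 0 :=
      sum_eq_zero fun k hk => by simp [hiddenEntry, hi, (mem_range.mp hk).ne]
    rw [hzero]
    simp [hiddenEntry, hi, stateEntry, bias, hx.1]
  · have hacc : ∑ k ∈ range N, hiddenEntry N p i k * stateEntry N x p k =
        ((N : ℝ) ^ 2)⁻¹ ^ p * interp N ((sawtooth N)^[p] x) := by
      rw [interp, ← sum_mul_stateEntry, mul_sum]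
      refine sum_congr rfl fun k hk => ?_
      rw [hiddenEntry, if_neg (by omega), if_neg (by omega), if_pos (mem_range.mp hk), mul_assoc]
    have hpre : ∑ k ∈ range N, hiddenEntry N p i k * stateEntry N x p k +
        hiddenEntry N p i N * stateEntry N x p N +
          hiddenEntry N p i (N + 1) * stateEntry N x p (N + 1) + bias N i =
            partialSum N x (p + 1) := by
      rw [hacc, partialSum_succ]
      simp [hiddenEntry, hi, bias, stateEntry]
      ring
    rw [hpre, max_eq_left (partialSum_nonneg hN hx _)]
    simp [stateEntry, hi]

theorem outputLayer_eq (N : ℕ) (x : ℝ) (m : ℕ) :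
    ∑ i, outputWeight N (m + 1) i * stateEntry N x m i = x - partialSum N x (m + 1) := by
  have hacc : ∑ k ∈ range N, outputEntry N (m + 1) k * stateEntry N x m k =
      -(((N : ℝ) ^ 2)⁻¹ ^ m * interp N ((sawtooth N)^[m] x)) := by
    rw [interp, ← sum_mul_stateEntry, mul_sum, ← sum_neg_distrib]
    refine sum_congr rfl fun k hk => ?_
    rw [outputEntry, if_pos (mem_range.mp hk), Nat.add_sub_cancel, neg_mul, mul_assoc]
  simp only [outputWeight]
  rw [sum_fin_add_two N fun k => outputEntry N (m + 1) k * stateEntry N x m k, hacc,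
    partialSum_succ]
  simp [outputEntry, stateEntry]
  ring

theorem squareNet_apply {N : ℕ} (hN : 1 ≤ N) {x : ℝ} (hx : x ∈ Set.Icc (0 : ℝ) 1) {L : ℕ}
    (hL : 1 ≤ L) : squareNet N L (fun _ => x) = x - partialSum N x L := by
  obtain ⟨m, rfl⟩ := Nat.exists_eq_add_of_le' hL
  rw [squareNet, netEval_map_range _ _ _ _ _ _ (fun s (i : Fin (N + 2)) => stateEntry N x s i)
    (inputLayer_eq hx.1) (hiddenLayer_eq hN hx), Nat.add_sub_cancel, add_zero, outputLayer_eq]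

theorem abs_sawtoothCoeff_le (N k : ℕ) : |sawtoothCoeff N k| ≤ 2 * N := by
  unfold sawtoothCoeff
  split_ifs
  · rw [Nat.abs_cast]; linarith [N.cast_nonneg (α := ℝ)]
  · rw [abs_mul, abs_pow, abs_neg, abs_one, one_pow, one_mul, abs_of_nonneg (by positivity)]

theorem abs_weighted_interpCoeff_le {N : ℕ} (hN : 1 ≤ N) (p k : ℕ) :
    |((N : ℝ) ^ 2)⁻¹ ^ p * interpCoeff N k| ≤ 2 * N := by
  have hN' : (1 : ℝ) ≤ N := by exact_mod_cast hN
  have hweight : |((N : ℝ) ^ 2)⁻¹ ^ p| ≤ 1 := by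
    rw [abs_of_nonneg (by positivity)]
    exact pow_le_one₀ (by positivity) (inv_le_one_of_one_le₀ (by nlinarith))
  have hcoeff : |interpCoeff N k| ≤ 2 := by
    unfold interpCoeff
    split_ifs
    · rw [abs_le, one_div]
      constructor <;> linarith [inv_nonneg.mpr (N.cast_nonneg (α := ℝ)), inv_le_one_of_one_le₀ hN']
    · rw [abs_neg, abs_div, Nat.abs_cast, abs_two, div_le_iff₀ (by positivity)]; linarith
  calc |((N : ℝ) ^ 2)⁻¹ ^ p * interpCoeff N k|
      = |((N : ℝ) ^ 2)⁻¹ ^ p| * |interpCoeff N k| := abs_mul _ _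
    _ ≤ 1 * 2 := mul_le_mul hweight hcoeff (abs_nonneg _) zero_le_one
    _ ≤ 2 * N := by linarith

theorem abs_hiddenEntry_le {N : ℕ} (hN : 1 ≤ N) (p i j : ℕ) : |hiddenEntry N p i j| ≤ 2 * N := by
  have hN' : (1 : ℝ) ≤ N := by exact_mod_cast hN
  unfold hiddenEntry
  split_ifs <;> first
    | exact abs_sawtoothCoeff_le N j
    | exact abs_weighted_interpCoeff_le hN p j
    | (simp only [abs_zero, abs_one]; linarith)

theorem abs_outputEntry_le {N : ℕ} (hN : 1 ≤ N) (L k : ℕ) : |outputEntry N L k| ≤ 2 * N := by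
  have hN' : (1 : ℝ) ≤ N := by exact_mod_cast hN
  unfold outputEntry
  split_ifs
  · rw [abs_neg]; exact abs_weighted_interpCoeff_le hN _ k
  · rw [abs_one]; linarith
  · rw [abs_neg, abs_one]; linarith

theorem abs_bias_le {N : ℕ} (hN : 1 ≤ N) (i : Fin (N + 2)) : |bias N i| ≤ 2 * N := by
  have hN' : (1 : ℝ) ≤ N := by exact_mod_cast hN
  unfold bias
  split_ifs with hi
  · have : (i : ℝ) / N ≤ 1 := (div_le_one (by positivity)).mpr (by exact_mod_cast hi.le)
    rw [abs_neg, abs_of_nonneg (by positivity)]; linarith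
  · rw [abs_zero]; linarith

theorem isReluNet_squareNet {N : ℕ} (hN : 1 ≤ N) {L : ℕ} (hL : 1 ≤ L) :
    IsReluNet (squareNet N L) (3 * N) L (2 * N) := by
  have hN' : (1 : ℝ) ≤ N := by exact_mod_cast hN
  refine ⟨N + 2, _, _, _, _, _, ?_, ?_, fun i j => ?_, abs_bias_le hN, ?_,
    fun i => abs_outputEntry_le hN L i, by rw [abs_zero]; linarith, fun _ => rfl⟩
  · push_cast; linarith
  · simp [Nat.cast_sub hL]
  · simp only [inputWeight, Matrix.of_apply]
    split_ifs <;> simp only [abs_zero, abs_one] <;> linarith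
  · simp only [List.mem_map, List.mem_range]
    rintro _ ⟨p, -, rfl⟩
    exact ⟨fun i j => abs_hiddenEntry_le hN p i j, abs_bias_le hN⟩

end SquareApprox

end

/-- For all `N, L ≥ 1` there is a ReLU network of width at most `3N`
and depth at most `L` approximating `x ↦ x²` on `[0,1]` with error `N^{-L}`, whose
parameters are bounded in absolute value by `C·N` for a universal constant `C > 0`. -/
theorem square_approximation_bounded_parameters :
    ∃ C : ℝ, 0 < C ∧
      ∀ N L : ℕ, 1 ≤ N → 1 ≤ L →
        ∃ φ : (Fin 1 → ℝ) → ℝ,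
          IsReluNet φ (3 * (N : ℝ)) (L : ℝ) (C * (N : ℝ)) ∧
          ∀ x : ℝ, x ∈ Set.Icc (0 : ℝ) 1 →
            |φ (fun _ => x) - x ^ 2| ≤ (N : ℝ) ^ (-(L : ℝ)) := by
  refine ⟨2, two_pos, fun N L hN hL => ⟨SquareApprox.squareNet N L,
    SquareApprox.isReluNet_squareNet hN hL, fun x hx => ?_⟩⟩
  rw [SquareApprox.squareNet_apply hN hx hL]
  exact SquareApprox.abs_sub_partialSum_sub_sq_le hN hx L
end

section
/- There exists a universal constant C > 0 such that for all N, L ∈ ℕ and any numbers θ_{m,l} ∈ {0,1} for 0 ≤ m ≤ N²L − 1 and 0 ≤ l ≤ L − 1, there exists a ReLU feed-forward neural network φ : ℝ² → ℝ of width at most C·N and depth at most C·L² such that φ(m, l) = Σ_{j=0}^{l} θ_{m,j} for all integers 0 ≤ m ≤ N²L − 1 and 0 ≤ l ≤ L − 1, and such that φ admits a representation all of whose parameters are bounded in absolute value by C·N²L. -/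
open Matrix Finset

lemma foldl_flatMap_range_induction {σ α : Type*} (f : σ → α → σ) (ls : ℕ → List α)
    (P : ℕ → σ → Prop) {n : ℕ} {s : σ} (h₀ : P 0 s)
    (hstep : ∀ k < n, ∀ s, P k s → P (k + 1) ((ls k).foldl f s)) :
    P n (((List.range n).flatMap ls).foldl f s) := by
  induction n with
  | zero => simpa using h₀
  | succ n ih =>
    rw [List.range_succ, List.flatMap_append, List.foldl_append, List.flatMap_singleton]
    exact hstep n n.lt_succ_self _ (ih fun k hk => hstep k (hk.trans n.lt_succ_self))

lemma norm_sum_fin_le {E : Type*} [SeminormedAddCommGroup E] {n : ℕ} (f : Fin n → E) {C : ℝ}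
    (h : ∀ i, ‖f i‖ ≤ C) : ‖∑ i, f i‖ ≤ n * C := by
  simpa using norm_sum_le_of_le Finset.univ fun i _ => h i

section ReluLayers

variable {ι κ : Type*}

def LayerBoundedBy (B : ℝ) (p : Matrix ι κ ℝ × (ι → ℝ)) : Prop :=
  (∀ i j, |p.1 i j| ≤ B) ∧ ∀ i, |p.2 i| ≤ B

lemma LayerBoundedBy.mono {B B' : ℝ} {p : Matrix ι κ ℝ × (ι → ℝ)} (h : LayerBoundedBy B p)
    (hB : B ≤ B') : LayerBoundedBy B' p :=
  ⟨fun i j => (h.1 i j).trans hB, fun i => (h.2 i).trans hB⟩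

variable [Fintype κ]

lemma layerBoundedBy_of_norm_le {B : ℝ} (r : ι → κ → ℝ) (b : ι → ℝ) (hr : ∀ i, ‖r i‖ ≤ B)
    (hb : ∀ i, |b i| ≤ B) : LayerBoundedBy B (Matrix.of r, b) :=
  ⟨fun i j => (norm_le_pi_norm (r i) j).trans (hr i), hb⟩

noncomputable def reluLayer (p : Matrix ι κ ℝ × (ι → ℝ)) (v : κ → ℝ) : ι → ℝ :=
  fun i => max ((p.1 *ᵥ v + p.2) i) 0

lemma reluLayer_apply (p : Matrix ι κ ℝ × (ι → ℝ)) (v : κ → ℝ) (i : ι) :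
    reluLayer p v i = max (p.1 i ⬝ᵥ v + p.2 i) 0 :=
  rfl

lemma reluLayer_of_apply (r : ι → κ → ℝ) (b : ι → ℝ) (v : κ → ℝ) (i : ι) :
    reluLayer (Matrix.of r, b) v i = max (r i ⬝ᵥ v + b i) 0 :=
  rfl

lemma reluLayer_reindex {ι' κ' : Type*} [Fintype κ'] (e : ι ≃ ι') (e' : κ ≃ κ')
    (p : Matrix ι κ ℝ × (ι → ℝ)) (v : κ → ℝ) :
    reluLayer (reindex e e' p.1, p.2 ∘ e.symm) (v ∘ e'.symm) = reluLayer p v ∘ e.symm := by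
  ext i
  simp [reluLayer, reindex_apply, submatrix_mulVec_equiv, Function.comp_assoc]

end ReluLayers

lemma IsReluNet.mono {d : ℕ} {f : (Fin d → ℝ) → ℝ} {W D B W' D' B' : ℝ}
    (h : IsReluNet f W D B) (hW : W ≤ W') (hD : D ≤ D') (hB : B ≤ B') :
    IsReluNet f W' D' B' := by
  obtain ⟨n, A₀, b₀, hidden, a, c, hn, hlen, hA₀, hb₀, hhidden, ha, hc, hf⟩ := h
  exact ⟨n, A₀, b₀, hidden, a, c, hn.trans hW, hlen.trans hD, fun i j => (hA₀ i j).trans hB,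
    fun i => (hb₀ i).trans hB, fun p hp => LayerBoundedBy.mono (hhidden p hp) hB,
    fun i => (ha i).trans hB, hc.trans hB, hf⟩

theorem isReluNet_of_fintype {d : ℕ} {ι : Type*} [Fintype ι] {f : (Fin d → ℝ) → ℝ} {B : ℝ}
    (input : Matrix ι (Fin d) ℝ × (ι → ℝ)) (hidden : List (Matrix ι ι ℝ × (ι → ℝ)))
    (a : ι → ℝ) (c : ℝ) (hinput : LayerBoundedBy B input)
    (hhidden : ∀ p ∈ hidden, LayerBoundedBy B p) (ha : ∀ i, |a i| ≤ B) (hc : |c| ≤ B)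
    (hf : ∀ x, f x = a ⬝ᵥ hidden.foldl (fun v p => reluLayer p v) (reluLayer input x) + c) :
    IsReluNet f (Fintype.card ι) (hidden.length + 1) B := by
  classical
  let e := Fintype.equivFin ι
  let transport (p : Matrix ι ι ℝ × (ι → ℝ)) := (reindex e e p.1, p.2 ∘ e.symm)
  have hfold : ∀ (ps : List (Matrix ι ι ℝ × (ι → ℝ))) (v : ι → ℝ),
      (ps.map transport).foldl (fun v p => reluLayer p v) (v ∘ e.symm) =
        ps.foldl (fun v p => reluLayer p v) v ∘ e.symm := by
    intro ps
    induction ps with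
    | nil => simp
    | cons p ps ih => intro v; rw [List.map_cons, List.foldl_cons, reluLayer_reindex, ih]; rfl
  refine ⟨_, reindex e (Equiv.refl _) input.1, input.2 ∘ e.symm, hidden.map transport, a ∘ e.symm,
    c, le_rfl, by simp, fun i j => hinput.1 _ _, fun i => hinput.2 _, ?_, fun i => ha _, hc,
    fun x => ?_⟩
  · simp only [List.mem_map]
    rintro _ ⟨p, hp, rfl⟩
    exact ⟨fun i j => (hhidden p hp).1 _ _, fun i => (hhidden p hp).2 _⟩
  · change _ = ∑ i, (a ∘ e.symm) i * ((hidden.map transport).foldl (fun v p => reluLayer p v)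
      (reluLayer (reindex e (Equiv.refl _) input.1, input.2 ∘ e.symm) x)) i + c
    have hinput := reluLayer_reindex e (Equiv.refl _) input x
    simp only [Equiv.refl_symm, Equiv.coe_refl, Function.comp_id] at hinput
    rw [hf, hinput, hfold, dotProduct, ← e.symm.sum_comp]
    rfl

lemma relu_step {x c : ℝ} {z : ℤ} (h : x - c = z) :
    max (x + (1 - c)) 0 - max (x + -c) 0 = if 0 ≤ z then 1 else 0 := by
  split_ifs with hz
  · have : (0 : ℝ) ≤ z := by exact_mod_cast hz
    rw [max_eq_left (by linarith), max_eq_left (by linarith)]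
    ring
  · have : (z : ℝ) ≤ -1 := by exact_mod_cast (by omega : z ≤ -1)
    rw [max_eq_right (by linarith), max_eq_right (by linarith)]
    ring

lemma relu_add_ite_sub_one {x : ℝ} (h₀ : 0 ≤ x) (h₁ : x ≤ 1) (P : Prop) [Decidable P] :
    max (x + (if P then 1 else 0) + -1) 0 = if P then x else 0 := by
  split_ifs
  · simp [h₀]
  · simp [h₁]

lemma sum_ite_intCast_eq {n : ℕ} (c : Fin n → ℝ) (k : Fin n) :
    (∑ k' : Fin n, if (k : ℤ) = k' then c k' else 0) = c k := by
  rw [Finset.sum_eq_single k (fun k' _ hk' => if_neg fun h => hk' (Fin.ext (by omega)).symm)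
    (by simp)]
  simp

lemma sum_ite_intCast_mem_Icc {n : ℕ} (c : Fin n → ℝ) (hc : ∀ k, c k ∈ Set.Icc 0 1) (z : ℤ) :
    (∑ k : Fin n, if z = k then c k else 0) ∈ Set.Icc 0 1 := by
  by_cases h : ∃ k : Fin n, z = k
  · obtain ⟨k, rfl⟩ := h
    rw [sum_ite_intCast_eq]
    exact hc k
  · rw [Finset.sum_eq_zero fun k _ => if_neg fun hk => h ⟨k, hk⟩]
    simp

namespace BitExtraction

/-- `m`, `l` carry the input and `acc` the running total. A pair `hi i`, `lo i` (or `lHi`, `lLo`)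
holds `ReLU (x - c + 1)`, `ReLU (x - c)` for some threshold `c`. `gate i` holds the gated one-hot
vector of the high digit and later the looked-up bits; `digit k` holds the one-hot vector of the
remainder. -/
inductive Channel (N : ℕ) where
  | m | l | acc | lHi | lLo
  | hi (i : Fin (N + 1)) | lo (i : Fin (N + 1))
  | digit (k : Fin N) | gate (i : Fin N)
  deriving DecidableEq, Fintype

lemma card_channel_le (N : ℕ) : Fintype.card (Channel N) ≤ 4 * N + 7 := by
  let f : (Fin 5 ⊕ Fin (N + 1) ⊕ Fin (N + 1)) ⊕ (Fin N ⊕ Fin N) → Channel N :=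
    Sum.elim (Sum.elim ![.m, .l, .acc, .lHi, .lLo] (Sum.elim .hi .lo)) (Sum.elim .digit .gate)
  have hf : Function.Surjective f := by
    rintro (_ | _ | _ | _ | _ | i | i | k | i)
    exacts [⟨.inl (.inl 0), rfl⟩, ⟨.inl (.inl 1), rfl⟩, ⟨.inl (.inl 2), rfl⟩,
      ⟨.inl (.inl 3), rfl⟩, ⟨.inl (.inl 4), rfl⟩, ⟨.inl (.inr (.inl i)), rfl⟩,
      ⟨.inl (.inr (.inr i)), rfl⟩, ⟨.inr (.inl k), rfl⟩, ⟨.inr (.inr i), rfl⟩]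
  have := Fintype.card_le_of_surjective f hf
  simp only [Fintype.card_sum, Fintype.card_fin] at this
  omega

variable {N : ℕ}

def coord (c : Channel N) : Channel N → ℝ := Pi.single c 1

def stepRow (i : Fin (N + 1)) : Channel N → ℝ := coord (.hi i) - coord (.lo i)

def totalRow : Channel N → ℝ := coord .acc + ∑ i, coord (.gate i)

def remRow (N : ℕ) : Channel N → ℝ := coord .m - (N : ℝ) • ∑ i : Fin N, stepRow i.succ

@[simp] lemma coord_dotProduct (c : Channel N) (v : Channel N → ℝ) : coord c ⬝ᵥ v = v c :=
  single_one_dotProduct c v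

@[simp] lemma stepRow_dotProduct (i : Fin (N + 1)) (v : Channel N → ℝ) :
    stepRow i ⬝ᵥ v = v (.hi i) - v (.lo i) := by
  simp [stepRow, sub_dotProduct]

@[simp] lemma totalRow_dotProduct (v : Channel N → ℝ) :
    totalRow ⬝ᵥ v = v .acc + ∑ i, v (.gate i) := by
  simp [totalRow, add_dotProduct, sum_dotProduct]

lemma norm_coord (c : Channel N) : ‖coord c‖ = 1 := by
  simp [coord, Pi.norm_single]

lemma norm_stepRow_le (i : Fin (N + 1)) : ‖(stepRow i : Channel N → ℝ)‖ ≤ 1 + 1 :=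
  norm_sub_le_of_le (norm_coord _).le (norm_coord _).le

lemma norm_totalRow_le : ‖(totalRow : Channel N → ℝ)‖ ≤ 1 + N * 1 :=
  norm_add_le_of_le (norm_coord _).le (norm_sum_fin_le _ fun _ => (norm_coord _).le)

lemma norm_remRow_le : ‖remRow N‖ ≤ 1 + N * (N * (1 + 1)) := by
  refine norm_sub_le_of_le (norm_coord _).le ?_
  rw [norm_smul, Real.norm_natCast]
  gcongr
  exact norm_sum_fin_le _ fun i => norm_stepRow_le i.succ

abbrev Layer (N : ℕ) : Type := Matrix (Channel N) (Channel N) ℝ × (Channel N → ℝ)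

def thresholdLayer (N j t : ℕ) : Layer N :=
  (Matrix.of fun
    | .m | .hi _ | .lo _ => coord .m
    | .l | .lHi | .lLo => coord .l
    | .acc => totalRow
    | _ => 0,
   fun
    | .lHi => 1 - j
    | .lLo => -j
    | .hi i => 1 - ((t * N + i) * N : ℕ)
    | .lo i => -((t * N + i) * N : ℕ)
    | _ => 0)

def gateLayer (N t : ℕ) : Layer N :=
  (Matrix.of fun
    | .m => coord .m
    | .l => coord .l
    | .acc => coord .acc
    | .gate i => stepRow i.castSucc - stepRow i.succ + (coord .lHi - coord .lLo)
    | .hi _ | .lo _ => remRow N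
    | _ => 0,
   fun
    | .gate _ => -1
    | .hi k => 1 - (t * N * N + k : ℕ)
    | .lo k => -(t * N * N + k : ℕ)
    | _ => 0)

def digitLayer (N : ℕ) : Layer N :=
  (Matrix.of fun
    | .m => coord .m
    | .l => coord .l
    | .acc => coord .acc
    | .gate i => coord (.gate i)
    | .digit k => stepRow k.castSucc - stepRow k.succ
    | _ => 0,
   0)

def lookupLayer (N : ℕ) (θ : ℕ → ℕ → ℝ) (j t : ℕ) : Layer N :=
  (Matrix.of fun
    | .m => coord .m
    | .l => coord .l
    | .acc => coord .acc
    | .gate i => ∑ k : Fin N, θ ((t * N + i) * N + k) j • coord (.digit k) + coord (.gate i)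
    | _ => 0,
   fun
    | .gate _ => -1
    | _ => 0)

def stage (N : ℕ) (θ : ℕ → ℕ → ℝ) (j t : ℕ) : List (Layer N) :=
  [thresholdLayer N j t, gateLayer N t, digitLayer N, lookupLayer N θ j t]

def PassesThrough (p : Layer N) : Prop :=
  p.1 .m = coord .m ∧ p.1 .l = coord .l ∧ p.1 .acc = coord .acc ∧
    p.2 .m = 0 ∧ p.2 .l = 0 ∧ p.2 .acc = 0

def Carries (m l : ℕ) (s : ℝ) (v : Channel N → ℝ) : Prop :=
  v .m = m ∧ v .l = l ∧ v .acc = s ∧ 0 ≤ s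

lemma Carries.reluLayer_of_passesThrough {m l : ℕ} {s : ℝ} {v : Channel N → ℝ}
    (hv : Carries m l s v) {p : Layer N} (hp : PassesThrough p) :
    Carries m l s (reluLayer p v) := by
  obtain ⟨hm, hl, hacc, hs⟩ := hv
  obtain ⟨hpm, hpl, hpacc, hbm, hbl, hbacc⟩ := hp
  simp only [Carries, reluLayer_apply, hpm, hpl, hpacc, hbm, hbl, hbacc, coord_dotProduct, hm, hl,
    hacc, add_zero, Nat.cast_nonneg, max_eq_left, hs, and_self]

/-- A stage leaves its contribution in the `gate` channels; the first layer of the next stage adds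
them into `acc`. -/
def Encodes (m l : ℕ) (s : ℝ) (v : Channel N → ℝ) : Prop :=
  v .m = m ∧ v .l = l ∧ 0 ≤ v .acc ∧ (∀ i, 0 ≤ v (.gate i)) ∧ v .acc + ∑ i, v (.gate i) = s

def HasThresholds (j t m l : ℕ) (s : ℝ) (v : Channel N → ℝ) : Prop :=
  Carries m l s v ∧ v .lHi - v .lLo = (if j ≤ l then 1 else 0) ∧
    ∀ i : Fin (N + 1), v (.hi i) - v (.lo i) = if t * N + i ≤ m / N then 1 else 0

/-- Off the block `m / N / N = t` all gates vanish, and only the integrality of `localRem` matters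
there. -/
def localRem (N t m : ℕ) : ℤ :=
  m - t * N * N - N * ∑ i : Fin N, if t * N + (i + 1) ≤ m / N then 1 else 0

def HasGates (j t m l : ℕ) (s : ℝ) (v : Channel N → ℝ) : Prop :=
  Carries m l s v ∧ (∀ i : Fin N, v (.gate i) = if m / N = t * N + i ∧ j ≤ l then 1 else 0) ∧
    ∀ k : Fin (N + 1), v (.hi k) - v (.lo k) = if (k : ℤ) ≤ localRem N t m then 1 else 0

def HasDigits (j t m l : ℕ) (s : ℝ) (v : Channel N → ℝ) : Prop :=
  Carries m l s v ∧ (∀ i : Fin N, v (.gate i) = if m / N = t * N + i ∧ j ≤ l then 1 else 0) ∧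
    ∀ k : Fin N, v (.digit k) = if localRem N t m = k then 1 else 0

variable {j t m l : ℕ} {s : ℝ} {v : Channel N → ℝ}

lemma Encodes.hasThresholds (hN : 0 < N) (hv : Encodes m l s v) :
    HasThresholds j t m l s (reluLayer (thresholdLayer N j t) v) := by
  obtain ⟨hm, hl, hacc, hgate, hs⟩ := hv
  refine ⟨⟨?_, ?_, ?_, ?_⟩, ?_, fun i => ?_⟩
  · simp [thresholdLayer, reluLayer_of_apply, hm]
  · simp [thresholdLayer, reluLayer_of_apply, hl]
  · simp only [thresholdLayer, reluLayer_of_apply, totalRow_dotProduct, add_zero, hs]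
    exact max_eq_left (hs ▸ add_nonneg hacc (Finset.sum_nonneg fun i _ => hgate i))
  · exact hs ▸ add_nonneg hacc (Finset.sum_nonneg fun i _ => hgate i)
  · simp only [thresholdLayer, reluLayer_of_apply, coord_dotProduct, hl]
    rw [relu_step (z := (l : ℤ) - j) (by push_cast; ring)]
    simp only [sub_nonneg, Nat.cast_le]
  · simp only [thresholdLayer, reluLayer_of_apply, coord_dotProduct, hm]
    rw [relu_step (z := (m : ℤ) - ((t * N + i) * N : ℕ)) (by push_cast; ring)]
    simp only [sub_nonneg, Nat.cast_le, Nat.le_div_iff_mul_le hN]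

lemma HasThresholds.hasGates (hv : HasThresholds j t m l s v) :
    HasGates j t m l s (reluLayer (gateLayer N t) v) := by
  obtain ⟨hc, hl, hthr⟩ := hv
  refine ⟨hc.reluLayer_of_passesThrough ⟨rfl, rfl, rfl, rfl, rfl, rfl⟩, fun i => ?_, fun k => ?_⟩
  · simp only [gateLayer, reluLayer_of_apply, add_dotProduct, sub_dotProduct, stepRow_dotProduct,
      coord_dotProduct, hthr, hl, Fin.val_castSucc, Fin.val_succ]
    generalize m / N = q; generalize t * N = a
    split_ifs <;> norm_num <;> omega
  · simp only [gateLayer, remRow, reluLayer_of_apply, sub_dotProduct, smul_dotProduct,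
      sum_dotProduct, stepRow_dotProduct, coord_dotProduct, smul_eq_mul, hthr, hc.1, Fin.val_succ]
    rw [relu_step (z := localRem N t m - k) (by push_cast [localRem]; ring)]
    simp only [sub_nonneg]

lemma HasGates.hasDigits (hv : HasGates j t m l s v) :
    HasDigits j t m l s (reluLayer (digitLayer N) v) := by
  obtain ⟨hc, hgate, hrem⟩ := hv
  refine ⟨hc.reluLayer_of_passesThrough ⟨rfl, rfl, rfl, rfl, rfl, rfl⟩, fun i => ?_, fun k => ?_⟩
  · simp only [digitLayer, reluLayer_of_apply, coord_dotProduct, Pi.zero_apply, add_zero, hgate]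
    split_ifs <;> norm_num
  · simp only [digitLayer, reluLayer_of_apply, sub_dotProduct, stepRow_dotProduct, Pi.zero_apply,
      add_zero, hrem, Fin.val_castSucc, Fin.val_succ, Nat.cast_add, Nat.cast_one]
    generalize localRem N t m = z
    split_ifs <;> norm_num <;> omega

lemma localRem_of_div_eq {i : ℕ} (hi : i < N) (hq : m / N = t * N + i) :
    localRem N t m = (m % N : ℕ) := by
  have hcount : (∑ i' : Fin N, if t * N + (i' + 1) ≤ m / N then 1 else 0 : ℤ) = i := by
    simp only [hq, Nat.add_le_add_iff_left, Nat.add_one_le_iff, Finset.sum_boole,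
      Fin.card_filter_val_lt, min_eq_right hi.le]
  have hm : (m : ℤ) = N * ((t * N + i : ℕ) : ℤ) + (m % N : ℕ) := by
    rw [← hq]; exact_mod_cast (Nat.div_add_mod m N).symm
  rw [localRem, hcount]
  push_cast at hm ⊢
  linear_combination hm

lemma sum_gated_lookup (hN : 0 < N) (θ : ℕ → ℕ → ℝ) (j t m l : ℕ) :
    (∑ i : Fin N, if m / N = t * N + i ∧ j ≤ l then
        ∑ k : Fin N, (if localRem N t m = k then θ ((t * N + i) * N + k) j else 0) else 0) =
      if m / N / N = t ∧ j ≤ l then θ m j else 0 := by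
  by_cases h : m / N / N = t ∧ j ≤ l
  · obtain ⟨ht, hjl⟩ := h
    let i₀ : Fin N := ⟨m / N % N, Nat.mod_lt _ hN⟩
    let k₀ : Fin N := ⟨m % N, Nat.mod_lt _ hN⟩
    have hq : m / N = t * N + i₀ := by rw [← ht]; exact (Nat.div_add_mod' (m / N) N).symm
    rw [if_pos ⟨ht, hjl⟩, Finset.sum_eq_single i₀, if_pos ⟨hq, hjl⟩, localRem_of_div_eq i₀.2 hq,
      sum_ite_intCast_eq _ k₀]
    · rw [← hq]
      exact congrArg (θ · j) (Nat.div_add_mod' m N)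
    · intro i _ hi
      refine if_neg fun ⟨hq', _⟩ => hi (Fin.ext (Nat.add_left_cancel (hq'.symm.trans hq)))
    · simp
  · rw [if_neg h]
    refine Finset.sum_eq_zero fun i _ => if_neg fun ⟨hq, hjl⟩ => h ⟨?_, hjl⟩
    rw [hq, Nat.add_comm, Nat.mul_comm, Nat.add_mul_div_left _ _ hN, Nat.div_eq_of_lt i.2,
      zero_add]

lemma HasDigits.encodes {θ : ℕ → ℕ → ℝ} (hN : 0 < N) (hθ : ∀ a b, θ a b = 0 ∨ θ a b = 1)
    (hv : HasDigits j t m l s v) :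
    Encodes m l (s + if m / N / N = t ∧ j ≤ l then θ m j else 0)
      (reluLayer (lookupLayer N θ j t) v) := by
  obtain ⟨hc, hgate, hdigit⟩ := hv
  obtain ⟨hm, hl, hacc, hs⟩ :=
    hc.reluLayer_of_passesThrough (p := lookupLayer N θ j t) ⟨rfl, rfl, rfl, rfl, rfl, rfl⟩
  have hout (i : Fin N) : reluLayer (lookupLayer N θ j t) v (.gate i) =
      if m / N = t * N + i ∧ j ≤ l then
        ∑ k : Fin N, (if localRem N t m = k then θ ((t * N + i) * N + k) j else 0) else 0 := by
    have hx := sum_ite_intCast_mem_Icc (fun k : Fin N => θ ((t * N + i) * N + k) j)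
      (fun k => by rcases hθ ((t * N + i) * N + k) j with h | h <;> simp [h]) (localRem N t m)
    simp only [lookupLayer, reluLayer_of_apply, add_dotProduct, sum_dotProduct, smul_dotProduct,
      coord_dotProduct, smul_eq_mul, hgate, hdigit, mul_ite, mul_one, mul_zero]
    exact relu_add_ite_sub_one hx.1 hx.2 _
  refine ⟨hm, hl, hacc ▸ hs, fun i => le_max_right _ _, ?_⟩
  rw [hacc, Finset.sum_congr rfl fun i _ => hout i, sum_gated_lookup hN]

lemma Encodes.foldl_stage {θ : ℕ → ℕ → ℝ} (hN : 0 < N) (hθ : ∀ a b, θ a b = 0 ∨ θ a b = 1)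
    (hv : Encodes m l s v) :
    Encodes m l (s + if m / N / N = t ∧ j ≤ l then θ m j else 0)
      ((stage N θ j t).foldl (fun v p => reluLayer p v) v) :=
  (hv.hasThresholds hN).hasGates.hasDigits.encodes hN hθ

def hiddenLayers (N L : ℕ) (θ : ℕ → ℕ → ℝ) : List (Layer N) :=
  (List.range L).flatMap fun j => (List.range L).flatMap fun t => stage N θ j t

lemma Encodes.foldl_hiddenLayers {L : ℕ} {θ : ℕ → ℕ → ℝ} (hN : 0 < N)
    (hθ : ∀ a b, θ a b = 0 ∨ θ a b = 1) (hm : m < N * N * L) (hl : l < L) (hv : Encodes m l 0 v) :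
    Encodes m l (∑ j ∈ range (l + 1), θ m j)
      ((hiddenLayers N L θ).foldl (fun v p => reluLayer p v) v) := by
  have hblock : m / N / N < L := by
    rw [Nat.div_div_eq_div_mul, Nat.div_lt_iff_lt_mul (by positivity), Nat.mul_comm]
    exact hm
  have hsum_t (j : ℕ) : (∑ t ∈ range L, if m / N / N = t ∧ j ≤ l then θ m j else 0) =
      if j ≤ l then θ m j else 0 := by
    simp only [ite_and, Finset.sum_ite_eq, Finset.mem_range, hblock, if_true]
  have hsum_j : (∑ j ∈ range L, if j ≤ l then θ m j else 0) = ∑ j ∈ range (l + 1), θ m j := by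
    rw [← Finset.sum_filter]
    congr 1
    ext j
    simp only [Finset.mem_filter, Finset.mem_range]
    omega
  rw [← hsum_j]
  refine foldl_flatMap_range_induction _ _
    (fun J w => Encodes m l (∑ j ∈ range J, if j ≤ l then θ m j else 0) w) (by simpa using hv)
    fun j _ w hw => ?_
  rw [Finset.sum_range_succ, ← hsum_t]
  refine foldl_flatMap_range_induction _ _ (fun T w' => Encodes m l
    ((∑ j ∈ range j, if j ≤ l then θ m j else 0) +
      ∑ t ∈ range T, if m / N / N = t ∧ j ≤ l then θ m j else 0) w') (by simpa using hw)
    fun t _ w' hw' => ?_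
  rw [Finset.sum_range_succ, ← add_assoc]
  exact hw'.foldl_stage hN hθ

lemma threshold_le {L t i : ℕ} (ht : t < L) (hi : i ≤ N) : (t * N + i) * N ≤ N ^ 2 * L := by
  have : t * N + i ≤ L * N := by nlinarith
  nlinarith

lemma sq_mul_ge {L : ℕ} (hN : 1 ≤ N) (hL : 1 ≤ L) :
    (1 : ℝ) ≤ N ^ 2 * L ∧ (N : ℝ) ≤ N ^ 2 * L ∧ (L : ℝ) ≤ N ^ 2 * L := by
  have hN₁ : (1 : ℝ) ≤ N := by exact_mod_cast hN
  have hL₁ : (1 : ℝ) ≤ L := by exact_mod_cast hL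
  have hN₂ : (1 : ℝ) ≤ N ^ 2 := one_le_pow₀ hN₁
  refine ⟨one_le_mul_of_one_le_of_one_le hN₂ hL₁, ?_, le_mul_of_one_le_left (by positivity) hN₂⟩
  nlinarith

lemma layerBoundedBy_thresholdLayer {L : ℕ} (hN : 1 ≤ N) (hj : j < L) (ht : t < L) :
    LayerBoundedBy (6 * N ^ 2 * L) (thresholdLayer N j t) := by
  obtain ⟨h1, hN', hL'⟩ := sq_mul_ge hN (by omega : 1 ≤ L)
  have hj' : (j : ℝ) ≤ L := by exact_mod_cast hj.le
  have hthr (i : Fin (N + 1)) : (((t * N + i) * N : ℕ) : ℝ) ≤ N ^ 2 * L := by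
    exact_mod_cast threshold_le ht (by omega)
  refine layerBoundedBy_of_norm_le _ _ (fun c => ?_) (fun c => ?_)
  · cases c <;> simp only [norm_coord, norm_zero] <;> linarith [norm_totalRow_le (N := N)]
  · rcases c with _ | _ | _ | _ | _ | i | i | _ | _ <;>
      simp only [abs_zero, abs_neg, Nat.abs_cast] <;>
      first | positivity | linarith | linarith [hthr i] |
        (rw [abs_le]; constructor <;> linarith) | (rw [abs_le]; constructor <;> linarith [hthr i])

lemma layerBoundedBy_gateLayer {L : ℕ} (hN : 1 ≤ N) (ht : t < L) :
    LayerBoundedBy (6 * N ^ 2 * L) (gateLayer N t) := by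
  obtain ⟨h1, -, -⟩ := sq_mul_ge hN (by omega : 1 ≤ L)
  have hN₂ : (N : ℝ) ^ 2 ≤ N ^ 2 * L :=
    le_mul_of_one_le_right (by positivity) (by exact_mod_cast (by omega : 1 ≤ L))
  have hthr (k : Fin (N + 1)) : ((t * N * N + k : ℕ) : ℝ) ≤ N ^ 2 * L := by
    have := threshold_le ht k.is_le
    exact_mod_cast (by nlinarith : t * N * N + k ≤ N ^ 2 * L)
  refine layerBoundedBy_of_norm_le _ _ (fun c => ?_) (fun c => ?_)
  · cases c
    case gate i =>
      exact (norm_add_le_of_le (norm_sub_le_of_le (norm_stepRow_le _) (norm_stepRow_le _))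
        (norm_sub_le_of_le (norm_coord _).le (norm_coord _).le)).trans (by linarith)
    all_goals simp only [norm_coord, norm_zero]; linarith [norm_remRow_le (N := N)]
  · rcases c with _ | _ | _ | _ | _ | k | k | _ | _ <;>
      simp only [abs_zero, abs_neg, Nat.abs_cast, abs_one] <;>
      first | positivity | linarith | linarith [hthr k] |
        (rw [abs_le]; constructor <;> linarith [hthr k])

lemma layerBoundedBy_digitLayer {L : ℕ} (hN : 1 ≤ N) (hL : 1 ≤ L) :
    LayerBoundedBy (6 * N ^ 2 * L) (digitLayer N) := by
  obtain ⟨h1, -, -⟩ := sq_mul_ge hN hL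
  refine layerBoundedBy_of_norm_le _ _ (fun c => ?_) (fun _ => ?_)
  · cases c
    case digit k =>
      exact (norm_sub_le_of_le (norm_stepRow_le _) (norm_stepRow_le _)).trans (by linarith)
    all_goals simp only [norm_coord, norm_zero]; linarith
  · simp only [Pi.zero_apply, abs_zero]
    positivity

lemma layerBoundedBy_lookupLayer {L : ℕ} {θ : ℕ → ℕ → ℝ} (hN : 1 ≤ N) (hL : 1 ≤ L)
    (hθ : ∀ a b, θ a b = 0 ∨ θ a b = 1) : LayerBoundedBy (6 * N ^ 2 * L) (lookupLayer N θ j t) := by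
  obtain ⟨h1, hN', -⟩ := sq_mul_ge hN hL
  have hθ₁ (a b : ℕ) : |θ a b| ≤ 1 := by rcases hθ a b with h | h <;> simp [h]
  refine layerBoundedBy_of_norm_le _ _ (fun c => ?_) (fun c => ?_)
  · cases c
    case gate i =>
      refine (norm_add_le_of_le (norm_sum_fin_le (C := 1) _ fun k => ?_) (norm_coord _).le).trans
        (by linarith)
      rw [norm_smul, norm_coord, Real.norm_eq_abs, mul_one]
      exact hθ₁ _ _
    all_goals simp only [norm_coord, norm_zero]; linarith
  · cases c <;> simp only [abs_zero, abs_neg, abs_one] <;> linarith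

lemma layerBoundedBy_of_mem_hiddenLayers {L : ℕ} {θ : ℕ → ℕ → ℝ} (hN : 1 ≤ N)
    (hθ : ∀ a b, θ a b = 0 ∨ θ a b = 1) {p : Layer N} (hp : p ∈ hiddenLayers N L θ) :
    LayerBoundedBy (6 * N ^ 2 * L) p := by
  simp only [hiddenLayers, stage, List.mem_flatMap, List.mem_range, List.mem_cons,
    List.not_mem_nil, or_false] at hp
  obtain ⟨j, hj, t, ht, rfl | rfl | rfl | rfl⟩ := hp
  exacts [layerBoundedBy_thresholdLayer hN hj ht, layerBoundedBy_gateLayer hN ht,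
    layerBoundedBy_digitLayer hN (by omega), layerBoundedBy_lookupLayer hN (by omega) hθ]

lemma length_hiddenLayers (N L : ℕ) (θ : ℕ → ℕ → ℝ) :
    (hiddenLayers N L θ).length = L * L * 4 := by
  simp [hiddenLayers, stage, Nat.mul_assoc]

def inputLayer (N : ℕ) : Matrix (Channel N) (Fin 2) ℝ × (Channel N → ℝ) :=
  (Matrix.of fun
    | .m => Pi.single 0 1
    | .l => Pi.single 1 1
    | _ => 0,
   0)

lemma encodes_inputLayer (m l : ℕ) : Encodes m l 0 (reluLayer (inputLayer N) ![m, l]) := by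
  refine ⟨?_, ?_, ?_, fun i => ?_, ?_⟩ <;> simp [inputLayer, reluLayer_of_apply]

lemma layerBoundedBy_inputLayer {L : ℕ} (hN : 1 ≤ N) (hL : 1 ≤ L) :
    LayerBoundedBy (6 * N ^ 2 * L) (inputLayer N) := by
  obtain ⟨h1, -, -⟩ := sq_mul_ge hN hL
  refine layerBoundedBy_of_norm_le _ _ (fun c => ?_) (fun _ => ?_)
  · cases c <;> simp only [Pi.norm_single, norm_one, norm_zero] <;> linarith
  · simp only [Pi.zero_apply, abs_zero]
    positivity

lemma Encodes.totalRow_dotProduct {m l : ℕ} {s : ℝ} {v : Channel N → ℝ} (hv : Encodes m l s v) :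
    totalRow ⬝ᵥ v = s :=
  (BitExtraction.totalRow_dotProduct v).trans hv.2.2.2.2

end BitExtraction

open BitExtraction

/-- Modified bit-extraction: for all `N, L ≥ 1` and bits
`θ_{m,l} ∈ {0,1}` (`0 ≤ m ≤ N²L - 1`, `0 ≤ l ≤ L - 1`) there is a ReLU network
`φ : ℝ² → ℝ` of width at most `C·N` and depth at most `C·L²` with
`φ(m, l) = ∑_{j≤l} θ_{m,j}`, whose parameters are bounded by `C·N²L`,
for a universal constant `C > 0`. -/
theorem bit_extraction_polynomial_parameters :
    ∃ C : ℝ, 0 < C ∧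
      ∀ N L : ℕ, 1 ≤ N → 1 ≤ L →
        ∀ θ : ℕ → ℕ → ℝ, (∀ m l, θ m l = 0 ∨ θ m l = 1) →
          ∃ φ : (Fin 2 → ℝ) → ℝ,
            IsReluNet φ (C * (N : ℝ)) (C * (L : ℝ) ^ 2) (C * (N : ℝ) ^ 2 * (L : ℝ)) ∧
            ∀ m l : ℕ, m ≤ N ^ 2 * L - 1 → l ≤ L - 1 →
              φ ![(m : ℝ), (l : ℝ)] = ∑ j ∈ Finset.range (l + 1), θ m j := by
  refine ⟨11, by norm_num, fun N L hN hL θ hθ => ?_⟩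
  obtain ⟨h1, hN', -⟩ := sq_mul_ge hN hL
  let φ (x : Fin 2 → ℝ) : ℝ := totalRow ⬝ᵥ
    (hiddenLayers N L θ).foldl (fun v p => reluLayer p v) (reluLayer (inputLayer N) x)
  refine ⟨φ, ?_, fun m l hm hl => ?_⟩
  · have hnet := isReluNet_of_fintype (f := φ) _ _ totalRow 0 (layerBoundedBy_inputLayer hN hL)
      (fun p hp => layerBoundedBy_of_mem_hiddenLayers hN hθ hp)
      (fun c => (norm_le_pi_norm _ c).trans (norm_totalRow_le.trans (by linarith)))
      (by simp only [abs_zero]; positivity) (fun x => (add_zero _).symm)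
    have hcard : (Fintype.card (Channel N) : ℝ) ≤ 4 * N + 7 := by exact_mod_cast card_channel_le N
    have hL₁ : (1 : ℝ) ≤ L := by exact_mod_cast hL
    refine hnet.mono ?_ ?_ (by linarith)
    · have : (1 : ℝ) ≤ N := by exact_mod_cast hN
      linarith
    · rw [length_hiddenLayers]
      push_cast
      nlinarith
  · have hm' : m < N * N * L := by
      have : 0 < N ^ 2 * L := by positivity
      rw [← sq]
      omega
    exact ((encodes_inputLayer m l).foldl_hiddenLayers (by omega) hθ hm'
      (by omega)).totalRow_dotProduct
end
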